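/- arXiv:2208.01143 — 7 statements merged into one kernel-verified Lean document; each statement's English description precedes it below -/
import Mathlib

section
/- Oscillation Theorem (interpolation form). With the notation below, the number of zeros of the linear interpolation ũ in the open interval (0,m), i.e. the cardinality of {x ∈ (0,m) : ũ(x) = 0}, equals the number of eigenvalues of the real symmetric matrix J_m, counted with multiplicity, that are strictly greater than E. -/
open Matrix Finset Module Submodule

namespace OscAux

variable {m : ℕ} {ι : Type} [Fintype ι]
  (F : (Fin m → ℝ) →ₗ[ℝ] (Fin m → ℝ) →ₗ[ℝ] ℝ)
  (w : ι → (Fin m → ℝ))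

lemma ortho_eval (horto : ∀ i j, i ≠ j → F (w i) (w j) = 0)
    (c : ι → ℝ) : F (∑ i, c i • w i) (∑ i, c i • w i) = ∑ i, c i ^ 2 * F (w i) (w i) := by
  simp only [map_sum, LinearMap.sum_apply, _root_.map_smul, LinearMap.smul_apply, smul_eq_mul]
  refine Finset.sum_congr rfl fun i _ => ?_
  rw [Finset.sum_eq_single i]
  · ring
  · intro j _ hj
    rw [horto j i hj]; ring
  · simp

lemma ortho_pos (horto : ∀ i j, i ≠ j → F (w i) (w j) = 0)
    (hpos : ∀ i, 0 < F (w i) (w i)) :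
    ∀ x ∈ span ℝ (Set.range w), x ≠ 0 → 0 < F x x := by
  intro x hx hx0
  obtain ⟨c, rfl⟩ := (mem_span_range_iff_exists_fun ℝ).mp hx
  rw [ortho_eval F w horto c]
  have hc : ∃ i, c i ≠ 0 := by
    by_contra h
    push_neg at h
    exact hx0 (by simp [h])
  obtain ⟨i₀, hi₀⟩ := hc
  refine Finset.sum_pos' (fun i _ => ?_) ⟨i₀, Finset.mem_univ _, ?_⟩
  · exact mul_nonneg (sq_nonneg _) (le_of_lt (hpos i))
  · exact mul_pos (by positivity) (hpos i₀)

lemma ortho_nonpos (horto : ∀ i j, i ≠ j → F (w i) (w j) = 0)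
    (hneg : ∀ i, F (w i) (w i) ≤ 0) :
    ∀ x ∈ span ℝ (Set.range w), F x x ≤ 0 := by
  intro x hx
  obtain ⟨c, rfl⟩ := (mem_span_range_iff_exists_fun ℝ).mp hx
  rw [ortho_eval F w horto c]
  exact Finset.sum_nonpos fun i _ =>
    mul_nonpos_of_nonneg_of_nonpos (sq_nonneg _) (hneg i)

lemma ortho_indep (horto : ∀ i j, i ≠ j → F (w i) (w j) = 0) (i₀ : ι)
    (hq : ∀ i, i ≠ i₀ → F (w i) (w i) ≠ 0) (h0 : w i₀ ≠ 0) :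
    LinearIndependent ℝ w := by
  rw [Fintype.linearIndependent_iff]
  intro c hc
  have hz : ∀ i, i ≠ i₀ → c i = 0 := by
    intro i hi
    have h1 : F (w i) (∑ j, c j • w j) = c i * F (w i) (w i) := by
      rw [map_sum, Finset.sum_eq_single i]
      · rw [_root_.map_smul, smul_eq_mul]
      · intro j _ hj; rw [_root_.map_smul, smul_eq_mul, horto i j (Ne.symm hj), mul_zero]
      · simp
    rw [hc, map_zero] at h1
    exact (mul_eq_zero.mp h1.symm).resolve_right (hq i hi)
  have hsum : ∑ j, c j • w j = c i₀ • w i₀ := by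
    rw [Finset.sum_eq_single i₀]
    · intro j _ hj; rw [hz j hj, zero_smul]
    · simp
  rw [hsum] at hc
  have hci₀ : c i₀ = 0 := by
    rcases smul_eq_zero.mp hc with h | h
    · exact h
    · exact absurd h h0
  intro i
  by_cases h : i = i₀
  · rw [h]; exact hci₀
  · exact hz i h

lemma dim_le (F : (Fin m → ℝ) →ₗ[ℝ] (Fin m → ℝ) →ₗ[ℝ] ℝ) (P N : Submodule ℝ (Fin m → ℝ))
    (hP : ∀ x ∈ P, x ≠ 0 → 0 < F x x) (hN : ∀ x ∈ N, F x x ≤ 0) :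
    finrank ℝ P + finrank ℝ N ≤ m := by
  have hinf : P ⊓ N = ⊥ := by
    rw [eq_bot_iff]
    intro x hx
    rcases eq_or_ne x 0 with h | h
    · simp [h]
    · exact absurd (hN x hx.2) (not_le.mpr (hP x hx.1 h))
  have hadd := Submodule.finrank_sup_add_finrank_inf_eq P N
  rw [hinf, finrank_bot, add_zero] at hadd
  rw [← hadd]
  have h2 : finrank ℝ ↥(P ⊔ N) ≤ finrank ℝ (Fin m → ℝ) := Submodule.finrank_le _
  simpa [Module.finrank_fintype_fun_eq_card] using h2



def vec (m : ℕ) (f : ℕ → ℝ) : Fin m → ℝ := fun i => f i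

def Tv (u : ℕ → ℝ) (k : ℕ) : ℕ → ℝ := fun n => if n < k then u n else 0

def ev (j : ℕ) : ℕ → ℝ := fun n => if n = j then 1 else 0

noncomputable def BF (m : ℕ) (J : Matrix (Fin m) (Fin m) ℝ) (E : ℝ) :
    (Fin m → ℝ) →ₗ[ℝ] (Fin m → ℝ) →ₗ[ℝ] ℝ :=
  Matrix.toLinearMap₂' ℝ (J - E • 1)

lemma sum_ite_fin {m : ℕ} (c : ℕ) (F : ℕ → ℝ) :
    ∑ j : Fin m, (if (j : ℕ) = c then F (j : ℕ) else 0) = if c < m then F c else 0 := by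
  by_cases h : c < m
  · rw [if_pos h, Finset.sum_eq_single (⟨c, h⟩ : Fin m)]
    · simp
    · intro j _ hj
      exact if_neg fun hc => hj (Fin.ext hc)
    · simp
  · rw [if_neg h]
    exact Finset.sum_eq_zero fun j _ => if_neg fun hc => h (by rw [← hc]; exact j.isLt)

lemma sum_ite_fin' {m : ℕ} (c : ℕ) (hc : c < m) (F : ℕ → ℝ) :
    ∑ j : Fin m, (if (j : ℕ) + 1 = c then F (j : ℕ) else 0)
      = if c = 0 then 0 else F (c - 1) := by
  by_cases h : c = 0
  · rw [if_pos h]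
    exact Finset.sum_eq_zero fun j _ => if_neg (by omega)
  · rw [if_neg h, Finset.sum_eq_single (⟨c - 1, by omega⟩ : Fin m)]
    · show (if c - 1 + 1 = c then F (c-1) else 0) = F (c - 1)
      rw [if_pos (by omega)]
    · intro j _ hj
      exact if_neg fun hc2 => hj (Fin.ext (show (j:ℕ) = c - 1 by omega))
    · simp

section Main

variable {m : ℕ} {E : ℝ} {a b u : ℕ → ℝ} {J : Matrix (Fin m) (Fin m) ℝ}

variable (hJ : ∀ i j : Fin m, J i j =
      if (i : ℕ) = (j : ℕ) then b i
      else if (i : ℕ) + 1 = (j : ℕ) then a i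
      else if (j : ℕ) + 1 = (i : ℕ) then a j
      else 0)

include hJ in
lemma mulVec_row (g : ℕ → ℝ) (hg : g m = 0) (i : Fin m) :
    ((J - E • 1) *ᵥ vec m g) i
      = (b i - E) * g i + a i * g ((i : ℕ) + 1)
        + (if (i : ℕ) = 0 then 0 else a ((i : ℕ) - 1) * g ((i : ℕ) - 1)) := by
  have key : ∀ j : Fin m, (J - E • 1) i j * vec m g j
      = (if (j : ℕ) = (i : ℕ) then (b i - E) * g (i : ℕ) else 0)
      + (if (j : ℕ) = (i : ℕ) + 1 then a i * g ((i : ℕ) + 1) else 0)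
      + (if (j : ℕ) + 1 = (i : ℕ) then a ((i : ℕ) - 1) * g ((i : ℕ) - 1) else 0) := by
    intro j
    rw [Matrix.sub_apply, Matrix.smul_apply, Matrix.one_apply, hJ i j]
    rcases Nat.lt_trichotomy ((i : ℕ)) ((j : ℕ)) with h | h | h
    · by_cases h2 : (i : ℕ) + 1 = (j : ℕ)
      · have hij : ¬ i = j := fun hc => by omega
        rw [if_neg (by omega), if_pos h2, if_neg hij]
        rw [if_neg (by omega), if_pos (by omega), if_neg (by omega)]
        have : g (j : ℕ) = g ((i : ℕ) + 1) := by rw [← h2]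
        simp only [vec, this, smul_eq_mul]
        ring
      · have hij : ¬ i = j := fun hc => by omega
        rw [if_neg (by omega), if_neg h2, if_neg (by omega), if_neg hij]
        rw [if_neg (by omega), if_neg (by omega), if_neg (by omega)]
        simp [vec]
    · have hij : i = j := Fin.ext h
      rw [if_pos h, if_pos hij]
      rw [if_pos (by omega), if_neg (by omega), if_neg (by omega)]
      have : g (j : ℕ) = g (i : ℕ) := by rw [← h]
      simp only [vec, this, smul_eq_mul]
      ring
    · have hij : ¬ i = j := fun hc => by omega
      by_cases h2 : (j : ℕ) + 1 = (i : ℕ)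
      · rw [if_neg (by omega), if_neg (by omega), if_pos h2, if_neg hij]
        rw [if_neg (by omega), if_neg (by omega), if_pos h2]
        have h3 : (j : ℕ) = (i : ℕ) - 1 := by omega
        have hg3 : g (j : ℕ) = g ((i : ℕ) - 1) := by rw [h3]
        have ha3 : a (j : ℕ) = a ((i : ℕ) - 1) := by rw [h3]
        simp only [vec, hg3, ha3, smul_eq_mul]
        ring
      · rw [if_neg (by omega), if_neg (by omega), if_neg h2, if_neg hij]
        rw [if_neg (by omega), if_neg (by omega), if_neg h2]
        simp [vec]
  have hmv : ((J - E • 1) *ᵥ vec m g) i = ∑ j : Fin m, (J - E • 1) i j * vec m g j := by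
    simp [Matrix.mulVec, dotProduct]
  rw [hmv]
  simp only [key]
  rw [Finset.sum_add_distrib, Finset.sum_add_distrib]
  rw [sum_ite_fin ((i : ℕ)) (fun _ => (b i - E) * g (i : ℕ)),
    sum_ite_fin ((i : ℕ) + 1) (fun _ => a i * g ((i : ℕ) + 1)),
    sum_ite_fin' ((i : ℕ)) i.isLt (fun _ => a ((i : ℕ) - 1) * g ((i : ℕ) - 1))]
  rw [if_pos i.isLt]
  by_cases h2 : (i : ℕ) + 1 < m
  · rw [if_pos h2]
  · rw [if_neg h2]
    have : g ((i : ℕ) + 1) = 0 := by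
      have : (i : ℕ) + 1 = m := by omega
      rw [this, hg]
    rw [this]
    ring_nf

include hJ in
lemma B_eval (f g : ℕ → ℝ) (hg : g m = 0) :
    BF m J E (vec m f) (vec m g)
      = ∑ i : Fin m, f (i : ℕ) *
          ((b i - E) * g i + a i * g ((i : ℕ) + 1)
            + (if (i : ℕ) = 0 then 0 else a ((i : ℕ) - 1) * g ((i : ℕ) - 1))) := by
  rw [BF, Matrix.toLinearMap₂'_apply']
  simp only [dotProduct]
  exact Finset.sum_congr rfl fun i _ => by rw [mulVec_row hJ g hg i]; rfl

variable (hm : 1 ≤ m) (hu0 : u 0 = 1)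
  (ha : ∀ n, n ≤ m - 1 → 0 < a n)
  (hurec : ∀ n, n < m → a n * u (n + 1) =
      (E - b n) * u n - (if n = 0 then 0 else a (n - 1) * u (n - 1)))

include hm ha in
lemma haa : ∀ n, n < m → 0 < a n := fun n h => ha n (by omega)

include hu0 hm ha hurec in
lemma noadj : ∀ n, n < m → u n ≠ 0 ∨ u (n + 1) ≠ 0 := by
  intro n
  induction n with
  | zero => intro _; left; rw [hu0]; norm_num
  | succ k ih =>
    intro hk
    by_contra hcon
    push_neg at hcon
    obtain ⟨h1, h2⟩ := hcon
    have hr := hurec (k + 1) hk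
    rw [h1, h2] at hr
    simp only [Nat.add_sub_cancel] at hr
    have hk0 : ¬ (k + 1 = 0) := by omega
    rw [if_neg hk0] at hr
    have hak : 0 < a k := haa hm ha k (by omega)
    have huk : u k = 0 := by
      have : a k * u k = 0 := by linarith
      rcases mul_eq_zero.mp this with h | h
      · exact absurd h (ne_of_gt hak)
      · exact h
    rcases ih (by omega) with h | h
    · exact h huk
    · exact h h1

include hJ hurec in
lemma B_T (f : ℕ → ℝ) (k : ℕ) (hk1 : 1 ≤ k) (hkm : k ≤ m) :
    BF m J E (vec m f) (vec m (Tv u k))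
      = f (k - 1) * (-(a (k - 1) * u k))
        + (if k < m then f k * (a (k - 1) * u (k - 1)) else 0) := by
  have hTm : Tv u k m = 0 := if_neg (by omega)
  rw [B_eval hJ f (Tv u k) hTm]
  have key : ∀ i : Fin m, f (i : ℕ) *
      ((b i - E) * Tv u k i + a i * Tv u k ((i : ℕ) + 1)
        + (if (i : ℕ) = 0 then 0 else a ((i : ℕ) - 1) * Tv u k ((i : ℕ) - 1)))
      = (if (i : ℕ) = k - 1 then f (k - 1) * (-(a (k - 1) * u k)) else 0)
      + (if (i : ℕ) = k then f k * (a (k - 1) * u (k - 1)) else 0) := by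
    intro i
    have him : (i : ℕ) < m := i.isLt
    rcases Nat.lt_trichotomy ((i : ℕ) + 1) k with hA | hB | hCD
    · -- i + 1 < k
      have e1 : Tv u k (i : ℕ) = u i := if_pos (by omega)
      have e2 : Tv u k ((i : ℕ) + 1) = u ((i : ℕ) + 1) := if_pos (by omega)
      have hrec := hurec i him
      rw [if_neg (show ¬ ((i:ℕ) = k - 1) by omega), if_neg (show ¬ ((i:ℕ) = k) by omega)]
      rw [e1, e2]
      by_cases h0 : (i : ℕ) = 0
      · rw [if_pos h0]
        rw [if_pos h0] at hrec
        have : (b i - E) * u i + a i * u ((i:ℕ) + 1) + 0 = 0 := by linarith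
        rw [this]; ring
      · rw [if_neg h0]
        rw [if_neg h0] at hrec
        have e3 : Tv u k ((i : ℕ) - 1) = u ((i : ℕ) - 1) := if_pos (by omega)
        rw [e3]
        have : (b i - E) * u i + a i * u ((i:ℕ) + 1)
            + a ((i:ℕ) - 1) * u ((i:ℕ) - 1) = 0 := by linarith
        rw [this]; ring
    · -- i + 1 = k
      have e1 : Tv u k (i : ℕ) = u i := if_pos (by omega)
      have e2 : Tv u k ((i : ℕ) + 1) = 0 := if_neg (by omega)
      have hrec := hurec i him
      rw [if_pos (show (i:ℕ) = k - 1 by omega), if_neg (show ¬ ((i:ℕ) = k) by omega)]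
      rw [e1, e2]
      have hik : (i : ℕ) = k - 1 := by omega
      have hik2 : (i : ℕ) + 1 = k := hB
      by_cases h0 : (i : ℕ) = 0
      · rw [if_pos h0]
        rw [if_pos h0] at hrec
        have : (b i - E) * u i + a i * 0 + 0 = -(a i * u ((i:ℕ) + 1)) := by linarith
        rw [this, hik2, hik]
        ring
      · rw [if_neg h0]
        rw [if_neg h0] at hrec
        have e3 : Tv u k ((i : ℕ) - 1) = u ((i : ℕ) - 1) := if_pos (by omega)
        rw [e3]
        have : (b i - E) * u i + a i * 0
            + a ((i:ℕ) - 1) * u ((i:ℕ) - 1) = -(a i * u ((i:ℕ) + 1)) := by linarith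
        rw [this, hik2, hik]
        ring
    · rcases Nat.lt_or_ge (i : ℕ) (k + 1) with hC | hD
      · -- i = k
        have hik : (i : ℕ) = k := by omega
        have e1 : Tv u k (i : ℕ) = 0 := if_neg (by omega)
        have e2 : Tv u k ((i : ℕ) + 1) = 0 := if_neg (by omega)
        have h0 : ¬ ((i : ℕ) = 0) := by omega
        have e3 : Tv u k ((i : ℕ) - 1) = u ((i : ℕ) - 1) := if_pos (by omega)
        rw [if_neg (show ¬ ((i:ℕ) = k - 1) by omega), if_pos hik]
        rw [e1, e2, if_neg h0, e3, hik]
        ring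
      · -- k < i
        have e1 : Tv u k (i : ℕ) = 0 := if_neg (by omega)
        have e2 : Tv u k ((i : ℕ) + 1) = 0 := if_neg (by omega)
        have h0 : ¬ ((i : ℕ) = 0) := by omega
        have e3 : Tv u k ((i : ℕ) - 1) = 0 := if_neg (by omega)
        rw [if_neg (show ¬ ((i:ℕ) = k - 1) by omega), if_neg (show ¬ ((i:ℕ) = k) by omega)]
        rw [e1, e2, if_neg h0, e3]
        ring
  rw [Finset.sum_congr rfl fun i _ => key i]
  rw [Finset.sum_add_distrib]
  rw [sum_ite_fin (k - 1) (fun _ => f (k - 1) * (-(a (k - 1) * u k))),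
    sum_ite_fin k (fun _ => f k * (a (k - 1) * u (k - 1)))]
  rw [if_pos (show k - 1 < m by omega)]

include hJ in
lemma B_e (f : ℕ → ℝ) (j : ℕ) (hj1 : 1 ≤ j) (hjm : j < m) :
    BF m J E (vec m f) (vec m (ev j))
      = f j * (b j - E) + f (j - 1) * a (j - 1)
        + (if j + 1 < m then f (j + 1) * a j else 0) := by
  have hem : ev j m = 0 := if_neg (by omega)
  rw [B_eval hJ f (ev j) hem]
  have key : ∀ i : Fin m, f (i : ℕ) *
      ((b i - E) * ev j i + a i * ev j ((i : ℕ) + 1)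
        + (if (i : ℕ) = 0 then 0 else a ((i : ℕ) - 1) * ev j ((i : ℕ) - 1)))
      = (if (i : ℕ) = j then f j * (b j - E) else 0)
      + (if (i : ℕ) = j - 1 then f (j - 1) * a (j - 1) else 0)
      + (if (i : ℕ) = j + 1 then f (j + 1) * a j else 0) := by
    intro i
    by_cases h1 : (i : ℕ) = j
    · have e1 : ev j (i : ℕ) = 1 := if_pos h1
      have e2 : ev j ((i : ℕ) + 1) = 0 := if_neg (by omega)
      have h0 : ¬ ((i : ℕ) = 0) := by omega
      have e3 : ev j ((i : ℕ) - 1) = 0 := if_neg (by omega)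
      rw [if_pos h1, if_neg (show ¬ ((i:ℕ) = j - 1) by omega),
        if_neg (show ¬ ((i:ℕ) = j + 1) by omega)]
      rw [e1, e2, if_neg h0, e3, h1]
      ring
    · by_cases h2 : (i : ℕ) = j - 1
      · have e1 : ev j (i : ℕ) = 0 := if_neg (by omega)
        have e2 : ev j ((i : ℕ) + 1) = 1 := if_pos (by omega)
        rw [if_neg h1, if_pos h2, if_neg (show ¬ ((i:ℕ) = j + 1) by omega)]
        rw [e1, e2]
        by_cases h0 : (i : ℕ) = 0
        · rw [if_pos h0, h2]
          ring
        · have e3 : ev j ((i : ℕ) - 1) = 0 := if_neg (by omega)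
          rw [if_neg h0, e3, h2]
          ring
      · by_cases h3 : (i : ℕ) = j + 1
        · have e1 : ev j (i : ℕ) = 0 := if_neg (by omega)
          have e2 : ev j ((i : ℕ) + 1) = 0 := if_neg (by omega)
          have h0 : ¬ ((i : ℕ) = 0) := by omega
          have e3 : ev j ((i : ℕ) - 1) = 1 := if_pos (by omega)
          rw [if_neg h1, if_neg h2, if_pos h3]
          rw [e1, e2, if_neg h0, e3]
          have hai : a ((i : ℕ) - 1) = a j := by rw [h3]; simp
          rw [hai, h3]
          ring
        · have e1 : ev j (i : ℕ) = 0 := if_neg (by omega)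
          have e2 : ev j ((i : ℕ) + 1) = 0 := if_neg (by omega)
          rw [if_neg h1, if_neg h2, if_neg h3]
          rw [e1, e2]
          by_cases h0 : (i : ℕ) = 0
          · rw [if_pos h0]; ring
          · have e3 : ev j ((i : ℕ) - 1) = 0 := if_neg (by omega)
            rw [if_neg h0, e3]; ring
  rw [Finset.sum_congr rfl fun i _ => key i]
  rw [Finset.sum_add_distrib, Finset.sum_add_distrib]
  rw [sum_ite_fin j (fun _ => f j * (b j - E)),
    sum_ite_fin (j - 1) (fun _ => f (j - 1) * a (j - 1)),
    sum_ite_fin (j + 1) (fun _ => f (j + 1) * a j)]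
  rw [if_pos hjm, if_pos (show j - 1 < m by omega)]

include hJ hurec in
lemma BTT (k l : ℕ) (hk1 : 1 ≤ k) (hkm : k ≤ m) (hl1 : 1 ≤ l) (hlm : l ≤ m) (hkl : k ≠ l) :
    BF m J E (vec m (Tv u k)) (vec m (Tv u l)) = 0 := by
  rw [B_T hJ hurec (Tv u k) l hl1 hlm]
  rcases lt_or_gt_of_ne hkl with h | h
  · rw [show Tv u k (l - 1) = 0 from if_neg (by omega)]
    by_cases h2 : l < m
    · rw [if_pos h2, show Tv u k l = 0 from if_neg (by omega)]; ring
    · rw [if_neg h2]; ring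
  · rw [show Tv u k (l - 1) = u (l - 1) from if_pos (by omega),
      show Tv u k l = u l from if_pos (by omega), if_pos (show l < m by omega)]
    ring

include hJ hurec in
lemma BTTdiag (k : ℕ) (hk1 : 1 ≤ k) (hkm : k ≤ m) :
    BF m J E (vec m (Tv u k)) (vec m (Tv u k)) = -(a (k - 1) * u (k - 1) * u k) := by
  rw [B_T hJ hurec (Tv u k) k hk1 hkm]
  rw [show Tv u k (k - 1) = u (k - 1) from if_pos (by omega)]
  by_cases h2 : k < m
  · rw [if_pos h2, show Tv u k k = 0 from if_neg (by omega)]; ring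
  · rw [if_neg h2]; ring

include hJ hurec in
lemma BTe_zero (k j : ℕ) (hk1 : 1 ≤ k) (hkm : k ≤ m) (hj1 : 1 ≤ j) (hjm : j < m)
    (hz : u j = 0) (h1 : k ≠ j) (h2 : k ≠ j + 1) :
    BF m J E (vec m (Tv u k)) (vec m (ev j)) = 0 := by
  rw [B_e hJ (Tv u k) j hj1 hjm]
  rcases Nat.lt_or_ge k (j + 1) with hlt | hge
  · -- k ≤ j - 1
    rw [show Tv u k j = 0 from if_neg (by omega),
      show Tv u k (j - 1) = 0 from if_neg (by omega)]
    by_cases h3 : j + 1 < m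
    · rw [if_pos h3, show Tv u k (j + 1) = 0 from if_neg (by omega)]; ring
    · rw [if_neg h3]; ring
  · -- k ≥ j + 2
    have hk2 : j + 2 ≤ k := by omega
    rw [show Tv u k j = u j from if_pos (by omega), hz,
      show Tv u k (j - 1) = u (j - 1) from if_pos (by omega),
      if_pos (show j + 1 < m by omega),
      show Tv u k (j + 1) = u (j + 1) from if_pos (by omega)]
    have hrec := hurec j hjm
    rw [hz, if_neg (show ¬ j = 0 by omega)] at hrec
    linarith [hrec]

include hJ in
lemma BTe_eqk (j : ℕ) (hj1 : 1 ≤ j) (hjm : j < m) :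
    BF m J E (vec m (Tv u j)) (vec m (ev j)) = a (j - 1) * u (j - 1) := by
  rw [B_e hJ (Tv u j) j hj1 hjm]
  rw [show Tv u j j = 0 from if_neg (by omega),
    show Tv u j (j - 1) = u (j - 1) from if_pos (by omega)]
  by_cases h3 : j + 1 < m
  · rw [if_pos h3, show Tv u j (j + 1) = 0 from if_neg (by omega)]; ring
  · rw [if_neg h3]; ring

include hJ hurec in
lemma BeT_zero (i k : ℕ) (hk1 : 1 ≤ k) (hkm : k ≤ m) (h1 : i ≠ k - 1) (h2 : i ≠ k) :
    BF m J E (vec m (ev i)) (vec m (Tv u k)) = 0 := by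
  rw [B_T hJ hurec (ev i) k hk1 hkm]
  rw [show ev i (k - 1) = 0 from if_neg (by omega)]
  by_cases h3 : k < m
  · rw [if_pos h3, show ev i k = 0 from if_neg (by omega)]; ring
  · rw [if_neg h3]; ring

include hJ hurec in
lemma BeT_eq (j : ℕ) (hj1 : 1 ≤ j) (hjm : j < m) :
    BF m J E (vec m (ev j)) (vec m (Tv u j)) = a (j - 1) * u (j - 1) := by
  rw [B_T hJ hurec (ev j) j hj1 (le_of_lt hjm)]
  rw [show ev j (j - 1) = 0 from if_neg (by omega), if_pos hjm,
    show ev j j = 1 from if_pos rfl]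
  ring

include hJ in
lemma Bee_diag (j : ℕ) (hj1 : 1 ≤ j) (hjm : j < m) :
    BF m J E (vec m (ev j)) (vec m (ev j)) = b j - E := by
  rw [B_e hJ (ev j) j hj1 hjm]
  rw [show ev j j = 1 from if_pos rfl, show ev j (j - 1) = 0 from if_neg (by omega)]
  by_cases h3 : j + 1 < m
  · rw [if_pos h3, show ev j (j + 1) = 0 from if_neg (by omega)]; ring
  · rw [if_neg h3]; ring

include hJ in
lemma Bee_far (i j : ℕ) (hj1 : 1 ≤ j) (hjm : j < m) (hfar : i + 1 < j ∨ j + 1 < i) :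
    BF m J E (vec m (ev i)) (vec m (ev j)) = 0 := by
  rw [B_e hJ (ev i) j hj1 hjm]
  rw [show ev i j = 0 from if_neg (by omega), show ev i (j - 1) = 0 from if_neg (by omega)]
  by_cases h3 : j + 1 < m
  · rw [if_pos h3, show ev i (j + 1) = 0 from if_neg (by omega)]; ring
  · rw [if_neg h3]; ring

include hu0 in
lemma zero_pos (n : ℕ) (hz : u n = 0) : 1 ≤ n := by
  rcases n with _ | k
  · rw [hu0] at hz; norm_num at hz
  · omega

include hu0 hm ha hurec in
lemma zeros_far (i j : ℕ) (hi : i < m) (hj : j < m) (hzi : u i = 0) (hzj : u j = 0)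
    (hij : i ≠ j) : i + 1 < j ∨ j + 1 < i := by
  rcases lt_or_gt_of_ne hij with h | h
  · left
    rcases Nat.lt_or_ge (i + 1) j with h2 | h2
    · exact h2
    · exfalso
      have : j = i + 1 := by omega
      rcases noadj hm hu0 ha hurec i hi with hc | hc
      · exact hc hzi
      · rw [← this] at hc; exact hc hzj
  · right
    rcases Nat.lt_or_ge (j + 1) i with h2 | h2
    · exact h2
    · exfalso
      have : i = j + 1 := by omega
      rcases noadj hm hu0 ha hurec j hj with hc | hc
      · exact hc hzj
      · rw [← this] at hc; exact hc hzi

lemma Bexp (x y x' y' : Fin m → ℝ) (d d' : ℝ) :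
    BF m J E (x + d • y) (x' + d' • y')
      = BF m J E x x' + d' * BF m J E x y' + d * BF m J E y x'
        + d * d' * BF m J E y y' := by
  simp only [map_add, _root_.map_smul, LinearMap.add_apply, LinearMap.smul_apply, smul_eq_mul]
  ring

open scoped Classical in
noncomputable def famv (m : ℕ) (E : ℝ) (a b u : ℕ → ℝ) (n : ℕ) : ℕ → ℝ :=
  if u (n + 1) = 0 ∧ n + 1 < m then
    fun i => Tv u (n + 1) i + (a n * u n / (1 + |b (n + 1) - E|)) * ev (n + 1) i
  else if u n = 0 then
    fun i => Tv u n i + (-(a (n - 1) * u (n - 1)) / (1 + |b n - E|)) * ev n i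
  else Tv u (n + 1)

lemma fam_first {n : ℕ} (h : u (n + 1) = 0 ∧ n + 1 < m) :
    vec m (famv m E a b u n)
      = vec m (Tv u (n + 1)) + (a n * u n / (1 + |b (n + 1) - E|)) • vec m (ev (n + 1)) := by
  rw [famv, if_pos h]; rfl

lemma fam_second {n : ℕ} (h1 : ¬ (u (n + 1) = 0 ∧ n + 1 < m)) (h2 : u n = 0) :
    vec m (famv m E a b u n)
      = vec m (Tv u n) + (-(a (n - 1) * u (n - 1)) / (1 + |b n - E|)) • vec m (ev n) := by
  rw [famv, if_neg h1, if_pos h2]; rfl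

lemma fam_plain {n : ℕ} (h1 : ¬ (u (n + 1) = 0 ∧ n + 1 < m)) (h2 : ¬ (u n = 0)) :
    vec m (famv m E a b u n) = vec m (Tv u (n + 1)) := by
  rw [famv, if_neg h1, if_neg h2]

lemma Bexp_left (x y z : Fin m → ℝ) (d : ℝ) :
    BF m J E (x + d • y) z = BF m J E x z + d * BF m J E y z := by
  simp only [map_add, _root_.map_smul, LinearMap.add_apply, LinearMap.smul_apply, smul_eq_mul]

lemma Bexp_right (x y z : Fin m → ℝ) (d : ℝ) :
    BF m J E x (y + d • z) = BF m J E x y + d * BF m J E x z := by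
  simp only [map_add, _root_.map_smul, smul_eq_mul]

include hJ hm hu0 ha hurec in
lemma ortho_blocks (j j' : ℕ) (hj1 : 1 ≤ j) (hjm : j < m) (hj'1 : 1 ≤ j') (hj'm : j' < m)
    (hzj : u j = 0) (hzj' : u j' = 0) (hjj' : j ≠ j') (d d' : ℝ) :
    BF m J E (vec m (Tv u j) + d • vec m (ev j)) (vec m (Tv u j') + d' • vec m (ev j')) = 0 := by
  have hfar := zeros_far hm hu0 ha hurec j j' hjm hj'm hzj hzj' hjj'
  rw [Bexp, BTT hJ hurec j j' hj1 (le_of_lt hjm) hj'1 (le_of_lt hj'm) hjj',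
    BTe_zero hJ hurec j j' hj1 (le_of_lt hjm) hj'1 hj'm hzj' hjj' (by omega),
    BeT_zero hJ hurec j j' hj'1 (le_of_lt hj'm) (by omega) hjj',
    Bee_far hJ j j' hj'1 hj'm hfar]
  ring

include hJ hurec in
lemma ortho_block_T (j k : ℕ) (hj1 : 1 ≤ j) (hjm : j < m) (hk1 : 1 ≤ k) (hkm : k ≤ m)
    (h1 : j ≠ k - 1) (h2 : j ≠ k) (d : ℝ) :
    BF m J E (vec m (Tv u j) + d • vec m (ev j)) (vec m (Tv u k)) = 0 := by
  rw [Bexp_left, BTT hJ hurec j k hj1 (le_of_lt hjm) hk1 hkm h2,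
    BeT_zero hJ hurec j k hk1 hkm h1 h2]
  ring

include hJ hurec in
lemma ortho_T_block (k j : ℕ) (hk1 : 1 ≤ k) (hkm : k ≤ m) (hj1 : 1 ≤ j) (hjm : j < m)
    (hzj : u j = 0) (h1 : k ≠ j) (h2 : k ≠ j + 1) (d' : ℝ) :
    BF m J E (vec m (Tv u k)) (vec m (Tv u j) + d' • vec m (ev j)) = 0 := by
  rw [Bexp_right, BTT hJ hurec k j hk1 hkm hj1 (le_of_lt hjm) h1,
    BTe_zero hJ hurec k j hk1 hkm hj1 hjm hzj h1 h2]
  ring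

include hJ hm hu0 ha hurec in
lemma fam_ortho (n n' : ℕ) (hn : n < m) (hn' : n' < m) (hne : n ≠ n')
    (hblk : ¬ ((n' = n + 1 ∧ u n' = 0) ∨ (n = n' + 1 ∧ u n = 0))) :
    BF m J E (vec m (famv m E a b u n)) (vec m (famv m E a b u n')) = 0 := by
  push_neg at hblk
  obtain ⟨hb1, hb2⟩ := hblk
  by_cases hA : u (n + 1) = 0 ∧ n + 1 < m
  · rw [fam_first hA]
    by_cases hB : u (n' + 1) = 0 ∧ n' + 1 < m
    · rw [fam_first hB]
      exact ortho_blocks hJ hm hu0 ha hurec (n + 1) (n' + 1) (by omega) hA.2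
        (by omega) hB.2 hA.1 hB.1 (by omega) _ _
    · by_cases hC : u n' = 0
      · rw [fam_second hB hC]
        have hn'1 : 1 ≤ n' := zero_pos hu0 n' hC
        have : n' ≠ n + 1 := fun h => (hb1 h) hC
        exact ortho_blocks hJ hm hu0 ha hurec (n + 1) n' (by omega) hA.2
          hn'1 hn' hA.1 hC (by omega) _ _
      · rw [fam_plain hB hC]
        have h1 : n + 1 ≠ (n' + 1) - 1 := by
          simp only [Nat.add_sub_cancel]
          intro h; exact hC (h ▸ hA.1)
        exact ortho_block_T hJ hurec (n + 1) (n' + 1) (by omega) hA.2 (by omega)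
          (by omega) h1 (by omega) _
  · by_cases hA2 : u n = 0
    · rw [fam_second hA hA2]
      have hn1 : 1 ≤ n := zero_pos hu0 n hA2
      by_cases hB : u (n' + 1) = 0 ∧ n' + 1 < m
      · rw [fam_first hB]
        have : n ≠ n' + 1 := fun h => (hb2 h) hA2
        exact ortho_blocks hJ hm hu0 ha hurec n (n' + 1) hn1 hn (by omega) hB.2
          hA2 hB.1 this _ _
      · by_cases hC : u n' = 0
        · rw [fam_second hB hC]
          exact ortho_blocks hJ hm hu0 ha hurec n n' hn1 hn
            (zero_pos hu0 n' hC) hn' hA2 hC hne _ _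
        · rw [fam_plain hB hC]
          have h1 : n ≠ (n' + 1) - 1 := by
            simp only [Nat.add_sub_cancel]
            exact hne
          have h2 : n ≠ n' + 1 := fun h => (hb2 h) hA2
          exact ortho_block_T hJ hurec n (n' + 1) hn1 hn (by omega) (by omega) h1 h2 _
    · rw [fam_plain hA hA2]
      by_cases hB : u (n' + 1) = 0 ∧ n' + 1 < m
      · rw [fam_first hB]
        have h2 : n + 1 ≠ (n' + 1) + 1 := by
          intro h
          have : n = n' + 1 := by omega
          exact hA2 (by rw [this]; exact hB.1)
        exact ortho_T_block hJ hurec (n + 1) (n' + 1) (by omega) (by omega)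
          (by omega) hB.2 hB.1 (by omega) h2 _
      · by_cases hC : u n' = 0
        · rw [fam_second hB hC]
          have hn'1 : 1 ≤ n' := zero_pos hu0 n' hC
          have h1 : n + 1 ≠ n' := by
            intro h
            exact hA ⟨h ▸ hC, by omega⟩
          exact ortho_T_block hJ hurec (n + 1) n' (by omega) (by omega)
            hn'1 hn' hC h1 (by omega) _
        · rw [fam_plain hB hC]
          exact BTT hJ hurec (n + 1) (n' + 1) (by omega) (by omega) (by omega)
            (by omega) (by omega)

def PosP (m : ℕ) (u : ℕ → ℝ) (n : ℕ) : Prop :=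
  u n * u (n + 1) < 0 ∨ (u (n + 1) = 0 ∧ n + 1 < m)

include hJ hm hu0 ha hurec in
lemma q_first {n : ℕ} (hA : u (n + 1) = 0 ∧ n + 1 < m) :
    0 < BF m J E (vec m (famv m E a b u n)) (vec m (famv m E a b u n)) := by
  have hnm : n < m := by omega
  have hun : u n ≠ 0 := by
    rcases noadj hm hu0 ha hurec n hnm with h | h
    · exact h
    · exact absurd hA.1 h
  have han : 0 < a n := haa hm ha n hnm
  have hM : (0:ℝ) < 1 + |b (n + 1) - E| := by positivity
  have hMne : (1:ℝ) + |b (n + 1) - E| ≠ 0 := ne_of_gt hM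
  have hval : BF m J E (vec m (famv m E a b u n)) (vec m (famv m E a b u n))
      = (a n * u n)^2 * (2 * (1 + |b (n + 1) - E|) + (b (n + 1) - E))
          / (1 + |b (n + 1) - E|)^2 := by
    rw [fam_first hA, Bexp,
      BTTdiag hJ hurec (n + 1) (by omega) (by omega),
      BTe_eqk hJ (n + 1) (by omega) hA.2,
      BeT_eq hJ hurec (n + 1) (by omega) hA.2,
      Bee_diag hJ (n + 1) (by omega) hA.2]
    simp only [Nat.add_sub_cancel]
    rw [hA.1]
    field_simp
    ring
  rw [hval]
  apply div_pos
  · apply mul_pos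
    · have hcne : a n * u n ≠ 0 := mul_ne_zero (ne_of_gt han) hun
      exact lt_of_le_of_ne (sq_nonneg _) (Ne.symm (pow_ne_zero 2 hcne))
    · have := neg_abs_le (b (n + 1) - E)
      have := abs_nonneg (b (n + 1) - E)
      linarith
  · positivity

include hJ hm hu0 ha hurec in
lemma q_second {n : ℕ} (hn : n < m) (hA : ¬ (u (n + 1) = 0 ∧ n + 1 < m)) (hz : u n = 0) :
    BF m J E (vec m (famv m E a b u n)) (vec m (famv m E a b u n)) < 0 := by
  have hn1 : 1 ≤ n := zero_pos hu0 n hz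
  have hun1 : u (n - 1) ≠ 0 := by
    rcases noadj hm hu0 ha hurec (n - 1) (by omega) with h | h
    · exact h
    · rw [show n - 1 + 1 = n by omega] at h
      exact absurd hz h
  have han : 0 < a (n - 1) := haa hm ha (n - 1) (by omega)
  have hM : (0:ℝ) < 1 + |b n - E| := by positivity
  have hMne : (1:ℝ) + |b n - E| ≠ 0 := ne_of_gt hM
  have hval : BF m J E (vec m (famv m E a b u n)) (vec m (famv m E a b u n))
      = (a (n - 1) * u (n - 1))^2 * ((b n - E) - 2 * (1 + |b n - E|))
          / (1 + |b n - E|)^2 := by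
    rw [fam_second hA hz, Bexp,
      BTTdiag hJ hurec n hn1 (le_of_lt hn),
      BTe_eqk hJ n hn1 hn,
      BeT_eq hJ hurec n hn1 hn,
      Bee_diag hJ n hn1 hn]
    rw [hz]
    field_simp
    ring
  rw [hval]
  apply div_neg_of_neg_of_pos
  · apply mul_neg_of_pos_of_neg
    · have hcne : a (n - 1) * u (n - 1) ≠ 0 := mul_ne_zero (ne_of_gt han) hun1
      exact lt_of_le_of_ne (sq_nonneg _) (Ne.symm (pow_ne_zero 2 hcne))
    · have := le_abs_self (b n - E)
      have := abs_nonneg (b n - E)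
      linarith
  · positivity

include hJ hurec in
lemma q_plain {n : ℕ} (hn : n < m) (hA : ¬ (u (n + 1) = 0 ∧ n + 1 < m)) (hz : ¬ (u n = 0)) :
    BF m J E (vec m (famv m E a b u n)) (vec m (famv m E a b u n))
      = -(a n * u n * u (n + 1)) := by
  rw [fam_plain hA hz, BTTdiag hJ hurec (n + 1) (by omega) (by omega)]
  simp only [Nat.add_sub_cancel]

include hJ hm hu0 ha hurec in
lemma q_pos_of_Pos {n : ℕ} (hn : n < m) (hp : PosP m u n) :
    0 < BF m J E (vec m (famv m E a b u n)) (vec m (famv m E a b u n)) := by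
  by_cases hA : u (n + 1) = 0 ∧ n + 1 < m
  · exact q_first hJ hm hu0 ha hurec hA
  · have hA2 : ¬ (u n = 0) := by
      intro h
      rcases hp with hf | hz2
      · rw [h, zero_mul] at hf; exact lt_irrefl 0 hf
      · exact hA hz2
    rw [q_plain hJ hurec hn hA hA2]
    rcases hp with hf | hz2
    · have han := haa hm ha n hn
      nlinarith [hf, han]
    · exact absurd hz2 hA

include hJ hm hu0 ha hurec in
lemma q_neg_strict {n : ℕ} (hn : n < m) (hp : ¬ PosP m u n)
    (hex : ¬ (u (n + 1) = 0 ∧ n + 1 = m)) :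
    BF m J E (vec m (famv m E a b u n)) (vec m (famv m E a b u n)) < 0 := by
  have hz1 : u (n + 1) ≠ 0 := by
    intro h
    by_cases h2 : n + 1 < m
    · exact hp (Or.inr ⟨h, h2⟩)
    · exact hex ⟨h, by omega⟩
  have hA : ¬ (u (n + 1) = 0 ∧ n + 1 < m) := fun h => hz1 h.1
  by_cases hz : u n = 0
  · exact q_second hJ hm hu0 ha hurec hn hA hz
  · rw [q_plain hJ hurec hn hA hz]
    have hnl : ¬ (u n * u (n + 1) < 0) := fun h => hp (Or.inl h)
    have hprod : 0 < u n * u (n + 1) :=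
      lt_of_le_of_ne (not_lt.mp hnl) (Ne.symm (mul_ne_zero hz hz1))
    nlinarith [haa hm ha n hn]

include hJ hm hu0 ha hurec in
lemma q_null {n : ℕ} (hn : n < m) (hz : u (n + 1) = 0) (he : n + 1 = m) :
    BF m J E (vec m (famv m E a b u n)) (vec m (famv m E a b u n)) = 0
      ∧ vec m (famv m E a b u n) ≠ 0 := by
  have hA : ¬ (u (n + 1) = 0 ∧ n + 1 < m) := fun h => by omega
  have hun : ¬ (u n = 0) := by
    rcases noadj hm hu0 ha hurec n hn with h | h
    · exact h
    · exact absurd hz h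
  constructor
  · rw [q_plain hJ hurec hn hA hun, hz]; ring
  · rw [fam_plain hA hun]
    intro hcon
    have h0 : vec m (Tv u (n + 1)) ⟨0, by omega⟩ = 0 := by rw [hcon]; rfl
    have h1 : vec m (Tv u (n + 1)) ⟨0, by omega⟩ = 1 := by
      show Tv u (n + 1) 0 = 1
      rw [Tv]
      simp only [if_pos (show 0 < n + 1 by omega)]
      exact hu0
    rw [h1] at h0
    norm_num at h0

include hJ hm hu0 ha hurec in
lemma q_zero_unique {n : ℕ} (hn : n < m) (hp : ¬ PosP m u n)
    (hq0 : BF m J E (vec m (famv m E a b u n)) (vec m (famv m E a b u n)) = 0) :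
    u (n + 1) = 0 ∧ n + 1 = m := by
  by_contra h
  exact (ne_of_lt (q_neg_strict hJ hm hu0 ha hurec hn hp h)) hq0

lemma B_ne_zero_of {x : Fin m → ℝ} (h : BF m J E x x ≠ 0) : x ≠ 0 := by
  intro hx
  rw [hx] at h
  simp at h

open scoped Classical in
include hJ hm hu0 ha hurec in
lemma card_eq (hHerm : J.IsHermitian) :
    ((Finset.range m).filter (PosP m u)).card
      = (Finset.univ.filter fun i : Fin m => E < hHerm.eigenvalues i).card := by
  classical
  set F := BF m J E with hF
  -- eigenvector data transported to plain functions
  set g : Fin m → (Fin m → ℝ) := fun i k => hHerm.eigenvectorBasis i k with hg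
  have hdot : ∀ i j : Fin m, g i ⬝ᵥ g j = if i = j then 1 else 0 := by
    intro i j
    have h := orthonormal_iff_ite.mp hHerm.eigenvectorBasis.orthonormal i j
    simp only [PiLp.inner_apply, RCLike.inner_apply, conj_trivial] at h
    simpa [dotProduct, hg, mul_comm] using h
  have hmul : ∀ j : Fin m, J *ᵥ g j = hHerm.eigenvalues j • g j := fun j =>
    hHerm.mulVec_eigenvectorBasis j
  have hBg : ∀ i j : Fin m, F (g i) (g j)
      = if i = j then hHerm.eigenvalues j - E else 0 := by
    intro i j
    rw [hF, BF, Matrix.toLinearMap₂'_apply']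
    rw [Matrix.sub_mulVec, Matrix.smul_mulVec, Matrix.one_mulVec, hmul j]
    rw [dotProduct_sub, dotProduct_smul, dotProduct_smul, hdot i j, smul_eq_mul, smul_eq_mul]
    by_cases h : i = j
    · rw [if_pos h, if_pos h]; ring
    · rw [if_neg h, if_neg h]; ring
  have hD : ∀ x y : Fin m → ℝ,
      Matrix.toLinearMap₂' ℝ (1 : Matrix (Fin m) (Fin m) ℝ) x y = x ⬝ᵥ y := by
    intro x y
    rw [Matrix.toLinearMap₂'_apply', Matrix.one_mulVec]
  set S : Finset (Fin m) := Finset.univ.filter (fun i => E < hHerm.eigenvalues i) with hS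
  set Sc : Finset (Fin m) := Finset.univ.filter (fun i => ¬ E < hHerm.eigenvalues i) with hSc
  -- spectral families
  set wP : {i : Fin m // i ∈ S} → (Fin m → ℝ) := fun s => g s.1 with hwP
  set wN : {i : Fin m // i ∈ Sc} → (Fin m → ℝ) := fun s => g s.1 with hwN
  have hval_ne : ∀ (i : Fin m), g i ≠ 0 := by
    intro i hcon
    have := hdot i i
    rw [hcon] at this
    simp at this
  have hindep : ∀ (T : Finset (Fin m)) (w : {i : Fin m // i ∈ T} → (Fin m → ℝ)),
      (∀ s, w s = g s.1) → LinearIndependent ℝ w := by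
    intro T w hw
    rcases isEmpty_or_nonempty {i : Fin m // i ∈ T} with he | ⟨⟨i₀⟩⟩
    · exact linearIndependent_empty_type
    · refine ortho_indep (Matrix.toLinearMap₂' ℝ (1 : Matrix (Fin m) (Fin m) ℝ)) w
        (fun s t hst => ?_) i₀ (fun s _ => ?_) ?_
      · rw [hw s, hw t, hD, hdot]
        rw [if_neg (fun h => hst (Subtype.ext h))]
      · rw [hw s, hD, hdot, if_pos rfl]
        norm_num
      · rw [hw i₀]; exact hval_ne _
  have hPind : LinearIndependent ℝ wP := hindep S wP (fun _ => rfl)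
  have hNind : LinearIndependent ℝ wN := hindep Sc wN (fun _ => rfl)
  have hPortho : ∀ s t, s ≠ t → F (wP s) (wP t) = 0 := by
    intro s t hst
    rw [hwP]
    simp only []
    rw [hBg, if_neg (fun h => hst (Subtype.ext h))]
  have hNortho : ∀ s t, s ≠ t → F (wN s) (wN t) = 0 := by
    intro s t hst
    rw [hwN]
    simp only []
    rw [hBg, if_neg (fun h => hst (Subtype.ext h))]
  have hPpos : ∀ s, 0 < F (wP s) (wP s) := by
    intro s
    rw [hwP]
    simp only []
    rw [hBg, if_pos rfl, sub_pos]
    exact (Finset.mem_filter.mp s.2).2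
  have hNneg : ∀ s, F (wN s) (wN s) ≤ 0 := by
    intro s
    rw [hwN]
    simp only []
    rw [hBg, if_pos rfl, sub_nonpos]
    exact le_of_not_gt (Finset.mem_filter.mp s.2).2
  -- explicit tridiagonal families
  set PosFS : Finset ℕ := (Finset.range m).filter (PosP m u) with hPosFS
  set NegFS : Finset ℕ := (Finset.range m).filter (fun n => ¬ PosP m u n) with hNegFS
  set wp : {n : ℕ // n ∈ PosFS} → (Fin m → ℝ) := fun s => vec m (famv m E a b u s.1) with hwp
  set wn : {n : ℕ // n ∈ NegFS} → (Fin m → ℝ) := fun s => vec m (famv m E a b u s.1) with hwn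
  have hmemP : ∀ s : {n : ℕ // n ∈ PosFS}, s.1 < m ∧ PosP m u s.1 := by
    intro s
    have := Finset.mem_filter.mp s.2
    exact ⟨Finset.mem_range.mp this.1, this.2⟩
  have hmemN : ∀ s : {n : ℕ // n ∈ NegFS}, s.1 < m ∧ ¬ PosP m u s.1 := by
    intro s
    have := Finset.mem_filter.mp s.2
    exact ⟨Finset.mem_range.mp this.1, this.2⟩
  have hportho : ∀ s t, s ≠ t → F (wp s) (wp t) = 0 := by
    intro s t hst
    obtain ⟨hs1, hs2⟩ := hmemP s
    obtain ⟨ht1, ht2⟩ := hmemP t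
    refine fam_ortho hJ hm hu0 ha hurec s.1 t.1 hs1 ht1
      (fun h => hst (Subtype.ext h)) ?_
    rintro (⟨h1, h2⟩ | ⟨h1, h2⟩)
    · rcases ht2 with hf | ⟨hz, _⟩
      · rw [h2, zero_mul] at hf; exact lt_irrefl 0 hf
      · rcases noadj hm hu0 ha hurec t.1 ht1 with hc | hc
        · exact hc h2
        · exact hc hz
    · rcases hs2 with hf | ⟨hz, _⟩
      · rw [h2, zero_mul] at hf; exact lt_irrefl 0 hf
      · rcases noadj hm hu0 ha hurec s.1 hs1 with hc | hc
        · exact hc h2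
        · exact hc hz
  have hnortho : ∀ s t, s ≠ t → F (wn s) (wn t) = 0 := by
    intro s t hst
    obtain ⟨hs1, hs2⟩ := hmemN s
    obtain ⟨ht1, ht2⟩ := hmemN t
    refine fam_ortho hJ hm hu0 ha hurec s.1 t.1 hs1 ht1
      (fun h => hst (Subtype.ext h)) ?_
    rintro (⟨h1, h2⟩ | ⟨h1, h2⟩)
    · exact hs2 (Or.inr ⟨h1 ▸ h2, h1 ▸ ht1⟩)
    · exact ht2 (Or.inr ⟨h1 ▸ h2, h1 ▸ hs1⟩)
  have hppos : ∀ s, 0 < F (wp s) (wp s) := by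
    intro s
    obtain ⟨hs1, hs2⟩ := hmemP s
    exact q_pos_of_Pos hJ hm hu0 ha hurec hs1 hs2
  have hnneg : ∀ s, F (wn s) (wn s) ≤ 0 := by
    intro s
    obtain ⟨hs1, hs2⟩ := hmemN s
    by_cases hex : u (s.1 + 1) = 0 ∧ s.1 + 1 = m
    · exact le_of_eq (q_null hJ hm hu0 ha hurec hs1 hex.1 hex.2).1
    · exact le_of_lt (q_neg_strict hJ hm hu0 ha hurec hs1 hs2 hex)
  have hpind : LinearIndependent ℝ wp := by
    rcases isEmpty_or_nonempty {n : ℕ // n ∈ PosFS} with he | ⟨⟨i₀⟩⟩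
    · exact linearIndependent_empty_type
    · exact ortho_indep F wp hportho i₀ (fun s _ => ne_of_gt (hppos s))
        (B_ne_zero_of (ne_of_gt (hppos i₀)))
  have hnind : LinearIndependent ℝ wn := by
    by_cases hex : ∃ s : {n : ℕ // n ∈ NegFS}, F (wn s) (wn s) = 0
    · obtain ⟨s₀, hs₀⟩ := hex
      refine ortho_indep F wn hnortho s₀ (fun s hs => ?_) ?_
      · intro hq0
        obtain ⟨hs1, hs2⟩ := hmemN s
        obtain ⟨t1, t2⟩ := hmemN s₀
        have h1 := q_zero_unique hJ hm hu0 ha hurec hs1 hs2 hq0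
        have h2 := q_zero_unique hJ hm hu0 ha hurec t1 t2 hs₀
        exact hs (Subtype.ext (by omega))
      · obtain ⟨t1, t2⟩ := hmemN s₀
        have h2 := q_zero_unique hJ hm hu0 ha hurec t1 t2 hs₀
        exact (q_null hJ hm hu0 ha hurec t1 h2.1 h2.2).2
    · push_neg at hex
      rcases isEmpty_or_nonempty {n : ℕ // n ∈ NegFS} with he | ⟨⟨i₀⟩⟩
      · exact linearIndependent_empty_type
      · exact ortho_indep F wn hnortho i₀ (fun s _ => hex s) (B_ne_zero_of (hex i₀))
  -- dimension comparison
  have hd1 := dim_le F (Submodule.span ℝ (Set.range wp)) (Submodule.span ℝ (Set.range wN))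
    (ortho_pos F wp hportho hppos) (ortho_nonpos F wN hNortho hNneg)
  have hd2 := dim_le F (Submodule.span ℝ (Set.range wP)) (Submodule.span ℝ (Set.range wn))
    (ortho_pos F wP hPortho hPpos) (ortho_nonpos F wn hnortho hnneg)
  rw [finrank_span_eq_card hpind, finrank_span_eq_card hNind] at hd1
  rw [finrank_span_eq_card hPind, finrank_span_eq_card hnind] at hd2
  simp only [Fintype.card_coe] at hd1 hd2
  have hcard1 : S.card + Sc.card = m := by
    rw [hS, hSc, Finset.card_filter_add_card_filter_not]
    simp
  have hcard2 : PosFS.card + NegFS.card = m := by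
    rw [hPosFS, hNegFS, Finset.card_filter_add_card_filter_not]
    simp
  omega

noncomputable def gmap (u : ℕ → ℝ) (n : ℕ) : ℝ :=
  if u (n + 1) = 0 then ((n : ℝ) + 1) else (n : ℝ) + u n / (u n - u (n + 1))

open scoped Classical in
include hm hu0 ha hurec in
lemma ncard_eq (v : ℝ → ℝ)
    (hv : ∀ x : ℝ, 0 ≤ x → x < (m : ℝ) →
      v x = (1 - (x - (⌊x⌋ : ℝ))) * u ⌊x⌋.toNat + (x - (⌊x⌋ : ℝ)) * u (⌊x⌋.toNat + 1)) :
    {x : ℝ | 0 < x ∧ x < (m : ℝ) ∧ v x = 0}.ncard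
      = ((Finset.range m).filter (PosP m u)).card := by
  classical
  set PosFS : Finset ℕ := (Finset.range m).filter (PosP m u) with hPosFS
  have hmain : ∀ n ∈ PosFS, ((n : ℝ) < gmap u n ∧ gmap u n ≤ (n : ℝ) + 1)
      ∧ (0 < gmap u n ∧ gmap u n < (m : ℝ) ∧ v (gmap u n) = 0) := by
    intro n hn
    obtain ⟨hnr, hnp⟩ := Finset.mem_filter.mp hn
    have hnm : n < m := Finset.mem_range.mp hnr
    by_cases hz : u (n + 1) = 0
    · have hnm2 : n + 1 < m := by
        rcases hnp with hf | ⟨_, h2⟩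
        · rw [hz, mul_zero] at hf; exact absurd hf (lt_irrefl 0)
        · exact h2
      have hg : gmap u n = (n : ℝ) + 1 := if_pos hz
      have hxm : ((n : ℝ) + 1) < (m : ℝ) := by exact_mod_cast hnm2
      have hfl : ⌊((n : ℝ) + 1)⌋ = ((n + 1 : ℕ) : ℤ) := by
        rw [show ((n : ℝ) + 1) = ((n + 1 : ℕ) : ℝ) by push_cast; ring, Int.floor_natCast]
      have hvx : v ((n : ℝ) + 1) = 0 := by
        rw [hv ((n : ℝ) + 1) (by positivity) hxm, hfl]
        simp only [Int.toNat_natCast]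
        push_cast
        rw [hz]
        ring
      refine ⟨⟨by rw [hg]; linarith, by rw [hg]⟩, ?_, ?_, ?_⟩
      · rw [hg]; positivity
      · rw [hg]; exact hxm
      · rw [hg]; exact hvx
    · have hf : u n * u (n + 1) < 0 := by
        rcases hnp with hf | ⟨h1, _⟩
        · exact hf
        · exact absurd h1 hz
      have hg : gmap u n = (n : ℝ) + u n / (u n - u (n + 1)) := if_neg hz
      have hne : u n ≠ u (n + 1) := by
        intro h
        rw [h] at hf
        nlinarith [sq_nonneg (u (n + 1))]
      have hd : u n - u (n + 1) ≠ 0 := sub_ne_zero.mpr hne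
      set t : ℝ := u n / (u n - u (n + 1)) with htdef
      have ht0 : 0 < t := by
        rcases mul_neg_iff.mp hf with ⟨hp, hq⟩ | ⟨hp, hq⟩
        · exact div_pos hp (by linarith)
        · exact div_pos_iff.mpr (Or.inr ⟨hp, by linarith⟩)
      have ht1 : t < 1 := by
        have hd2 : u (n + 1) - u n ≠ 0 := sub_ne_zero.mpr (Ne.symm hne)
        have he : 1 - t = u (n + 1) / (u (n + 1) - u n) := by
          rw [eq_div_iff hd2, htdef]
          field_simp
          ring
        have h1t : 0 < 1 - t := by
          rw [he]
          rcases mul_neg_iff.mp hf with ⟨hp, hq⟩ | ⟨hp, hq⟩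
          · exact div_pos_iff.mpr (Or.inr ⟨hq, by linarith⟩)
          · exact div_pos hq (by linarith)
        linarith
      have hfl : ⌊(n : ℝ) + t⌋ = (n : ℤ) := by
        rw [Int.floor_eq_iff]
        constructor
        · push_cast; linarith
        · push_cast; linarith
      have hvx : v ((n : ℝ) + t) = 0 := by
        have hx0 : (0 : ℝ) ≤ (n : ℝ) + t := by positivity
        have hxm : (n : ℝ) + t < (m : ℝ) := by
          have : ((n : ℝ) + 1) ≤ (m : ℝ) := by exact_mod_cast hnm
          linarith
        rw [hv _ hx0 hxm, hfl]
        simp only [Int.toNat_natCast, Int.cast_natCast]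
        have harg : (n : ℝ) + t - (n : ℝ) = t := by ring
        rw [harg, htdef]
        field_simp
        ring
      refine ⟨⟨by rw [hg]; linarith, by rw [hg]; linarith⟩, ?_, ?_, ?_⟩
      · rw [hg]; positivity
      · rw [hg]
        have : ((n : ℝ) + 1) ≤ (m : ℝ) := by exact_mod_cast hnm
        linarith
      · rw [hg]; exact hvx
  have hZ : {x : ℝ | 0 < x ∧ x < (m : ℝ) ∧ v x = 0} = ↑(PosFS.image (gmap u)) := by
    ext x
    simp only [Set.mem_setOf_eq, Finset.coe_image, Set.mem_image, Finset.mem_coe]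
    constructor
    · rintro ⟨hx0, hxm, hvx⟩
      have hfl0 : (0 : ℤ) ≤ ⌊x⌋ := Int.floor_nonneg.mpr (le_of_lt hx0)
      set n : ℕ := ⌊x⌋.toNat with hndef
      have hxn : ((n : ℕ) : ℝ) = ((⌊x⌋ : ℤ) : ℝ) := by
        rw [hndef]
        exact_mod_cast congrArg (fun z : ℤ => (z : ℝ)) (Int.toNat_of_nonneg hfl0)
      have hflm : ⌊x⌋ < (m : ℤ) := Int.floor_lt.mpr (by exact_mod_cast hxm)
      have hnm : n < m := by omega
      have hvx2 : (1 - (x - (n : ℝ))) * u n + (x - (n : ℝ)) * u (n + 1) = 0 := by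
        rw [← hvx, hv x (le_of_lt hx0) hxm, hxn]
      have htle : (n : ℝ) ≤ x := by
        have := Int.floor_le x
        rw [← hxn] at this
        exact this
      have htlt : x < (n : ℝ) + 1 := by
        have := Int.lt_floor_add_one x
        rw [← hxn] at this
        exact this
      by_cases ht : x - (n : ℝ) = 0
      · have hxeq : x = (n : ℝ) := by linarith
        have hun : u n = 0 := by
          rw [ht] at hvx2
          simpa using hvx2
        have hn1 : 1 ≤ n := by
          by_contra h
          have : n = 0 := by omega
          rw [this, hu0] at hun
          norm_num at hun
        refine ⟨n - 1, ?_, ?_⟩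
        · rw [hPosFS, Finset.mem_filter, Finset.mem_range]
          refine ⟨by omega, Or.inr ⟨?_, by omega⟩⟩
          rw [show n - 1 + 1 = n by omega]
          exact hun
        · rw [gmap, if_pos (by rw [show n - 1 + 1 = n by omega]; exact hun)]
          rw [hxeq]
          have : ((n - 1 : ℕ) : ℝ) = (n : ℝ) - 1 := by
            push_cast [hn1]
            ring
          rw [this]
          ring
      · set t : ℝ := x - (n : ℝ) with htdef
        have ht0 : 0 < t := lt_of_le_of_ne (by linarith) (Ne.symm ht)
        have ht1 : t < 1 := by rw [htdef]; linarith
        have hun : u n ≠ 0 := by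
          intro h
          rw [h] at hvx2
          have h2 : u (n + 1) = 0 := by
            have := hvx2
            rw [mul_zero, zero_add] at this
            rcases mul_eq_zero.mp this with h3 | h3
            · exact absurd h3 (ne_of_gt ht0)
            · exact h3
          rcases noadj hm hu0 ha hurec n hnm with hc | hc
          · exact hc h
          · exact hc h2
        have hq : u (n + 1) ≠ 0 := by
          intro h
          rw [h] at hvx2
          have h2 : u n = 0 := by
            have := hvx2
            rw [mul_zero, add_zero] at this
            rcases mul_eq_zero.mp this with h3 | h3
            · exfalso; linarith
            · exact h3
          exact hun h2
        have h5 : (1 - t) * (u n * u (n + 1)) + t * (u (n + 1))^2 = 0 := by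
          linear_combination hvx2 * u (n + 1)
        have hq2 : 0 < (u (n + 1))^2 :=
          lt_of_le_of_ne (sq_nonneg _) (Ne.symm (pow_ne_zero 2 hq))
        have hflip : u n * u (n + 1) < 0 := by nlinarith
        refine ⟨n, ?_, ?_⟩
        · rw [hPosFS, Finset.mem_filter, Finset.mem_range]
          exact ⟨hnm, Or.inl hflip⟩
        · rw [gmap, if_neg hq]
          have hne : u n ≠ u (n + 1) := by
            intro h
            rw [h] at hflip
            nlinarith [sq_nonneg (u (n + 1))]
          have hd : u n - u (n + 1) ≠ 0 := sub_ne_zero.mpr hne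
          have hteq : t = u n / (u n - u (n + 1)) := by
            rw [eq_div_iff hd]
            linear_combination (-1 : ℝ) * hvx2
          rw [← hteq, htdef]
          ring
    · rintro ⟨n, hn, rfl⟩
      obtain ⟨_, h2⟩ := hmain n hn
      exact h2
  rw [hZ, Set.ncard_coe_finset]
  have hinj : Set.InjOn (gmap u) ↑PosFS := by
    intro n hn n' hn' heq
    rw [Finset.mem_coe] at hn hn'
    by_contra hne
    obtain ⟨⟨hb1, hb2⟩, _⟩ := hmain n hn
    obtain ⟨⟨hb1', hb2'⟩, _⟩ := hmain n' hn'
    rcases lt_or_gt_of_ne hne with h | h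
    · have hcast : ((n : ℝ) + 1) ≤ (n' : ℝ) := by exact_mod_cast h
      linarith
    · have hcast : ((n' : ℝ) + 1) ≤ (n : ℝ) := by exact_mod_cast h
      linarith
  rw [Finset.card_image_of_injOn hinj]

end Main


end OscAux

/-- **Oscillation Theorem (interpolation form).**
The number of zeros of the linear interpolation of the Dirichlet solution in the open
interval `(0, m)` equals the number of eigenvalues of the `m × m` Jacobi matrix `J`
(counted with multiplicity) that are strictly greater than `E`. -/
theorem oscillation_theorem_interpolation
    (m : ℕ) (hm : 1 ≤ m) (E : ℝ) (a b : ℕ → ℝ)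
    (ha : ∀ n, n ≤ m - 1 → 0 < a n)
    (J : Matrix (Fin m) (Fin m) ℝ)
    (hJ : ∀ i j : Fin m, J i j =
      if (i : ℕ) = (j : ℕ) then b i
      else if (i : ℕ) + 1 = (j : ℕ) then a i
      else if (j : ℕ) + 1 = (i : ℕ) then a j
      else 0)
    (hHerm : J.IsHermitian)
    (u : ℕ → ℝ) (hu0 : u 0 = 1)
    (hurec : ∀ n, n < m → a n * u (n + 1) =
      (E - b n) * u n - (if n = 0 then 0 else a (n - 1) * u (n - 1)))
    (v : ℝ → ℝ)
    (hv : ∀ x : ℝ, 0 ≤ x → x < (m : ℝ) →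
      v x = (1 - (x - (⌊x⌋ : ℝ))) * u ⌊x⌋.toNat + (x - (⌊x⌋ : ℝ)) * u (⌊x⌋.toNat + 1))
    (hvm : v (m : ℝ) = u m) :
    {x : ℝ | 0 < x ∧ x < (m : ℝ) ∧ v x = 0}.ncard =
      (Finset.univ.filter fun i : Fin m => E < hHerm.eigenvalues i).card := by
  rw [OscAux.ncard_eq hm hu0 ha hurec v hv]
  exact OscAux.card_eq hJ hm hu0 ha hurec hHerm
end

section
/- Oscillation Theorem (sign-change form). With the notation below, assume additionally that u(j) ≠ 0 for every 1 ≤ j ≤ m-1. Then the number of indices j ∈ {0,…,m-1} with u(j)·u(j+1) < 0 equals the number of eigenvalues of the real symmetric matrix J_m, counted with multiplicity, that are strictly greater than E. -/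
/-!
The quadratic form `q x = ⟪x, (J - E) x⟫` is diagonalized in two ways. In an orthonormal
eigenbasis of `J` its coefficients are `λᵢ - E`. Substituting `xₖ = uₖ yₖ` (discrete Picone
identity, i.e. the `LDLᵀ` factorization of `J - E` whose pivots are read off the Dirichlet
solution) writes it as `∑ₖ -(aₖ uₖ₊₁ / uₖ) (xₖ - (uₖ / uₖ₊₁) xₖ₊₁)²`, whose coefficients are
positive exactly at the sign changes of `u`. By Sylvester's law of inertia both diagonalizations
have the same number of positive coefficients.
-/

open Finset Matrix Module

section Inertia

variable {𝕜 V ι : Type*} [Field 𝕜] [LinearOrder 𝕜] [IsStrictOrderedRing 𝕜]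
  [AddCommGroup V] [Module 𝕜 V] [Fintype ι]

theorem card_pos_le_of_sum_sq (Q : V → 𝕜) {ν δ : ι → 𝕜} (r s : V ≃ₗ[𝕜] (ι → 𝕜))
    (hr : ∀ x, Q x = ∑ i, ν i * r x i ^ 2) (hs : ∀ x, Q x = ∑ i, δ i * s x i ^ 2) :
    #{i | 0 < ν i} ≤ #{i | 0 < δ i} := by
  classical
  -- `Q` is positive definite on the image of `φ` and negative semidefinite on the kernel of `ψ`.
  let φ : ({i // 0 < ν i} → 𝕜) →ₗ[𝕜] V :=
    r.symm.toLinearMap ∘ₗ Function.ExtendByZero.linearMap 𝕜 Subtype.val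
  let ψ : ({i // 0 < ν i} → 𝕜) →ₗ[𝕜] ({i // 0 < δ i} → 𝕜) :=
    LinearMap.funLeft 𝕜 𝕜 Subtype.val ∘ₗ s.toLinearMap ∘ₗ φ
  have hψ : Function.Injective ψ := by
    rw [← LinearMap.ker_eq_bot, LinearMap.ker_eq_bot']
    intro c hc
    have hle : Q (φ c) ≤ 0 := by
      rw [hs]
      refine sum_nonpos fun i _ => ?_
      by_cases hi : 0 < δ i
      · have : s (φ c) i = 0 := congrFun hc ⟨i, hi⟩
        simp [this]
      · exact mul_nonpos_of_nonpos_of_nonneg (not_lt.1 hi) (sq_nonneg _)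
    have hterm : ∀ i, 0 ≤ ν i * r (φ c) i ^ 2 := by
      intro i
      by_cases hi : 0 < ν i
      · positivity
      · have : ¬∃ j : {i // 0 < ν i}, j.val = i := fun ⟨j, hj⟩ => hi (hj ▸ j.2)
        simp [φ, Function.extend_apply' _ _ _ this]
    have hzero := (sum_eq_zero_iff_of_nonneg fun i _ => hterm i).1
      (le_antisymm (hr (φ c) ▸ hle) (sum_nonneg fun i _ => hterm i))
    funext i
    have := hzero i (mem_univ _)
    simp only [φ, LinearMap.comp_apply, LinearEquiv.coe_coe, LinearEquiv.apply_symm_apply,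
      Function.ExtendByZero.linearMap_apply, Subtype.val_injective.extend_apply] at this
    simpa [i.2.ne'] using this
  simpa [Fintype.card_subtype] using LinearMap.finrank_le_finrank_of_injective hψ

theorem card_pos_eq_of_sum_sq (Q : V → 𝕜) {ν δ : ι → 𝕜} (r s : V ≃ₗ[𝕜] (ι → 𝕜))
    (hr : ∀ x, Q x = ∑ i, ν i * r x i ^ 2) (hs : ∀ x, Q x = ∑ i, δ i * s x i ^ 2) :
    #{i | 0 < ν i} = #{i | 0 < δ i} :=
  (card_pos_le_of_sum_sq Q r s hr hs).antisymm (card_pos_le_of_sum_sq Q s r hs hr)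

end Inertia

theorem Matrix.IsHermitian.dotProduct_mulVec_sub_eq_sum_eigenvalues {n : Type*} [Fintype n]
    [DecidableEq n] {A : Matrix n n ℝ} (hA : A.IsHermitian) (E : ℝ) (x : n → ℝ) :
    x ⬝ᵥ (A *ᵥ x) - E * (x ⬝ᵥ x) =
      ∑ i, (hA.eigenvalues i - E) * ((star hA.eigenvectorUnitary : Matrix n n ℝ) *ᵥ x) i ^ 2 := by
  set U : Matrix n n ℝ := (hA.eigenvectorUnitary : Matrix n n ℝ)
  set y := star U *ᵥ x
  have hdot : ∀ w, x ⬝ᵥ (U *ᵥ w) = y ⬝ᵥ w := fun w => by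
    rw [dotProduct_mulVec, ← mulVec_transpose, ← conjTranspose_eq_transpose_of_trivial,
      ← star_eq_conjTranspose]
  have hx : x = U *ᵥ y := by
    rw [mulVec_mulVec, Unitary.mul_star_self_of_mem hA.eigenvectorUnitary.2, one_mulVec]
  have hself : x ⬝ᵥ x = y ⬝ᵥ y := by rw [← hdot, ← hx]
  have hA' : A *ᵥ x = U *ᵥ (diagonal hA.eigenvalues *ᵥ y) := by
    conv_lhs => rw [hA.spectral_theorem]
    simp [y, U, mulVec_mulVec, Matrix.mul_assoc]
  rw [hA', hdot, hself]
  simp only [dotProduct, mulVec_diagonal, mul_sum, ← sum_sub_distrib]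
  exact sum_congr rfl fun i _ => by ring

theorem Fin.card_filter_univ_eq_card_filter_range {m : ℕ} (p : ℕ → Prop) [DecidablePred p] :
    #{i : Fin m | p i} = #{k ∈ range m | p k} := by
  rw [← Nat.Iio_eq_range, ← Fin.map_valEmbedding_univ, filter_map, card_map]
  rfl

theorem Fin.extend_val_of_le {R : Type*} [Zero R] {m k : ℕ} (x : Fin m → R) (hk : m ≤ k) :
    Function.extend Fin.val x 0 k = 0 :=
  Function.extend_apply' _ _ _ fun ⟨i, hi⟩ => by omega

theorem Fin.sum_ite_val_eq_extend {R : Type*} [AddCommMonoid R] {m : ℕ} (x : Fin m → R)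
    (k : ℕ) : ∑ j : Fin m, (if k = j then x j else 0) = Function.extend Fin.val x 0 k := by
  simp_rw [← Fin.val_injective.extend_apply x 0]
  rw [Fin.sum_univ_eq_sum_range (fun j => if k = j then Function.extend Fin.val x 0 j else 0),
    sum_ite_eq, ite_eq_left_iff, mem_range, not_lt]
  exact fun hk => (Fin.extend_val_of_le x hk).symm

theorem dotProduct_self_eq_sum_range {R : Type*} [CommSemiring R] {m : ℕ} (x : Fin m → R) :
    x ⬝ᵥ x = ∑ k ∈ range m, Function.extend Fin.val x 0 k ^ 2 := by
  rw [dotProduct, ← Fin.sum_univ_eq_sum_range]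
  simp [Fin.val_injective.extend_apply, sq]

section Superdiagonal

variable {R : Type*} [CommRing R] {m : ℕ}

def superdiagonal (m : ℕ) (c : ℕ → R) : Matrix (Fin m) (Fin m) R :=
  of fun i j => if (i : ℕ) + 1 = j then c i else 0

theorem superdiagonal_mulVec (c : ℕ → R) (x : Fin m → R) (i : Fin m) :
    (superdiagonal m c *ᵥ x) i = c i * Function.extend Fin.val x 0 (i + 1) := by
  simp only [mulVec, dotProduct, superdiagonal, of_apply, ite_mul, zero_mul, ← mul_ite_zero,
    ← mul_sum, Fin.sum_ite_val_eq_extend]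

theorem one_sub_superdiagonal_mulVec (c : ℕ → R) (x : Fin m → R) (i : Fin m) :
    ((1 - superdiagonal m c) *ᵥ x) i =
      Function.extend Fin.val x 0 i - c i * Function.extend Fin.val x 0 (i + 1) := by
  rw [sub_mulVec, one_mulVec, Pi.sub_apply, superdiagonal_mulVec,
    Fin.val_injective.extend_apply]

theorem det_one_sub_superdiagonal (c : ℕ → R) : (1 - superdiagonal m c).det = 1 := by
  rw [det_of_isUpperTriangular]
  · simp [superdiagonal]
  · intro i j hij
    have : (j : ℕ) < i := hij
    rw [Matrix.sub_apply, one_apply_ne (by omega), superdiagonal, of_apply, if_neg (by omega),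
      sub_zero]

theorem dotProduct_superdiagonal_mulVec (c : ℕ → R) (x : Fin m → R) :
    x ⬝ᵥ (superdiagonal m c *ᵥ x) =
      ∑ k ∈ range m, c k * Function.extend Fin.val x 0 k * Function.extend Fin.val x 0 (k + 1) := by
  rw [dotProduct, ← Fin.sum_univ_eq_sum_range]
  refine sum_congr rfl fun i _ => ?_
  rw [superdiagonal_mulVec, Fin.val_injective.extend_apply]
  ring

theorem eq_diagonal_add_superdiagonal_add_transpose {a b : ℕ → R}
    {J : Matrix (Fin m) (Fin m) R}
    (hJ : ∀ i j : Fin m, J i j =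
      if (i : ℕ) = (j : ℕ) then b i
      else if (i : ℕ) + 1 = (j : ℕ) then a i
      else if (j : ℕ) + 1 = (i : ℕ) then a j
      else 0) :
    J = diagonal (fun i : Fin m => b i) + superdiagonal m a + (superdiagonal m a)ᵀ := by
  ext i j
  simp only [hJ, Matrix.add_apply, diagonal_apply, transpose_apply, superdiagonal, of_apply,
    Fin.ext_iff]
  split_ifs <;> first | omega | simp

theorem dotProduct_jacobi_mulVec (a b : ℕ → R) (x : Fin m → R) :
    x ⬝ᵥ ((diagonal (fun i : Fin m => b i) + superdiagonal m a + (superdiagonal m a)ᵀ) *ᵥ x) =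
      ∑ k ∈ range m, (b k * Function.extend Fin.val x 0 k ^ 2 +
        2 * a k * Function.extend Fin.val x 0 k * Function.extend Fin.val x 0 (k + 1)) := by
  have htranspose : x ⬝ᵥ ((superdiagonal m a)ᵀ *ᵥ x) = x ⬝ᵥ (superdiagonal m a *ᵥ x) := by
    rw [mulVec_transpose, dotProduct_comm, dotProduct_mulVec]
  have hdiag : x ⬝ᵥ (diagonal (fun i : Fin m => b i) *ᵥ x) =
      ∑ k ∈ range m, b k * Function.extend Fin.val x 0 k ^ 2 := by
    rw [dotProduct, ← Fin.sum_univ_eq_sum_range]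
    simp [mulVec_diagonal, Fin.val_injective.extend_apply, sq, mul_left_comm]
  rw [add_mulVec, add_mulVec, dotProduct_add, dotProduct_add, htranspose, hdiag,
    dotProduct_superdiagonal_mulVec, ← sum_add_distrib, ← sum_add_distrib]
  exact sum_congr rfl fun k _ => by ring

end Superdiagonal

/-- The last coefficient `u (m - 1) / u m` may be a junk value `x / 0 = 0`; this is harmless
because it multiplies `x m = 0`. -/
theorem sum_jacobi_quadratic_eq_sum_sq {K : Type*} [Field K] {m : ℕ} {E : K} {a b u : ℕ → K}
    (hurec : ∀ n < m, a n * u (n + 1) =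
      (E - b n) * u n - (if n = 0 then 0 else a (n - 1) * u (n - 1)))
    (hu : ∀ k < m, u k ≠ 0) (x : ℕ → K) (hx : x m = 0) :
    ∑ k ∈ range m, ((b k - E) * x k ^ 2 + 2 * a k * x k * x (k + 1)) =
      ∑ k ∈ range m, -(a k * u (k + 1) / u k) * (x k - u k / u (k + 1) * x (k + 1)) ^ 2 := by
  set w : ℕ → K := fun k => (if k = 0 then 0 else a (k - 1) * u (k - 1)) / u k * x k ^ 2
  have hw : ∑ k ∈ range m, w (k + 1) = ∑ k ∈ range m, w k := by
    have h := sum_range_succ' w m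
    rw [sum_range_succ] at h
    simpa [w, hx] using h.symm
  have hsplit : ∀ k ∈ range m,
      -(a k * u (k + 1) / u k) * (x k - u k / u (k + 1) * x (k + 1)) ^ 2 =
        -(a k * u (k + 1) / u k) * x k ^ 2 + 2 * a k * x k * x (k + 1) - w (k + 1) := by
    intro k hk
    have huk := hu k (mem_range.1 hk)
    rcases eq_or_ne (u (k + 1)) 0 with h | h
    · have : k + 1 = m := by by_contra h'; exact hu (k + 1) (by simp at hk; omega) h
      have hx' : x (k + 1) = 0 := this ▸ hx
      simp [w, h, hx']
    · simp only [w, Nat.add_sub_cancel, if_neg k.succ_ne_zero]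
      field_simp
      ring
  have hdiag : ∀ k ∈ range m,
      -(a k * u (k + 1) / u k) * x k ^ 2 - w k = (b k - E) * x k ^ 2 := by
    intro k hk
    have huk := hu k (mem_range.1 hk)
    have := hurec k (mem_range.1 hk)
    simp only [w]
    field_simp
    linear_combination (-x k ^ 2) * this
  rw [sum_congr rfl hsplit, sum_sub_distrib, hw, sum_add_distrib, sum_add_distrib,
    ← sum_congr rfl hdiag, sum_sub_distrib]
  ring

theorem neg_mul_div_pos_iff {K : Type*} [Field K] [LinearOrder K] [IsStrictOrderedRing K]
    {a v w : K} (ha : 0 < a) : 0 < -(a * w / v) ↔ v * w < 0 := by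
  rw [neg_pos, mul_div_assoc, ← smul_eq_mul, smul_neg_iff_of_pos_left ha, div_neg_iff,
    mul_neg_iff]
  tauto

theorem oscillation_theorem_sign_changes_general
    (m : ℕ) (E : ℝ) (a b : ℕ → ℝ)
    (ha : ∀ n, n ≤ m - 1 → 0 < a n)
    (J : Matrix (Fin m) (Fin m) ℝ)
    (hJ : ∀ i j : Fin m, J i j =
      if (i : ℕ) = (j : ℕ) then b i
      else if (i : ℕ) + 1 = (j : ℕ) then a i
      else if (j : ℕ) + 1 = (i : ℕ) then a j
      else 0)
    (hHerm : J.IsHermitian)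
    (u : ℕ → ℝ) (hu0 : u 0 = 1)
    (hurec : ∀ n, n < m → a n * u (n + 1) =
      (E - b n) * u n - (if n = 0 then 0 else a (n - 1) * u (n - 1)))
    (hnz : ∀ j, 1 ≤ j → j ≤ m - 1 → u j ≠ 0) :
    ((Finset.range m).filter fun j => u j * u (j + 1) < 0).card =
      (Finset.univ.filter fun i : Fin m => E < hHerm.eigenvalues i).card := by
  have hu : ∀ k < m, u k ≠ 0 := by
    rintro (_ | k) hk
    · simp [hu0]
    · exact hnz _ (by omega) (by omega)
  let s := (1 - superdiagonal m fun k => u k / u (k + 1)).toLinearEquiv (Pi.basisFun ℝ (Fin m))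
    (by rw [det_one_sub_superdiagonal]; exact isUnit_one)
  have hs : ∀ x, x ⬝ᵥ (J *ᵥ x) - E * (x ⬝ᵥ x) =
      ∑ i : Fin m, -(a i * u (i + 1) / u i) * s x i ^ 2 := by
    intro x
    simp only [s, toLinearEquiv_apply, toLin_eq_toLin', toLin'_apply,
      one_sub_superdiagonal_mulVec]
    rw [eq_diagonal_add_superdiagonal_add_transpose hJ, dotProduct_jacobi_mulVec,
      dotProduct_self_eq_sum_range, mul_sum, ← sum_sub_distrib]
    convert sum_jacobi_quadratic_eq_sum_sq hurec hu _ (Fin.extend_val_of_le x le_rfl) using 1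
    · exact sum_congr rfl fun k _ => by ring
    · rw [← Fin.sum_univ_eq_sum_range]
  have hcount := card_pos_eq_of_sum_sq _
    (UnitaryGroup.toLinearEquiv (star hHerm.eigenvectorUnitary)) s
    (hHerm.dotProduct_mulVec_sub_eq_sum_eigenvalues E) hs
  simp only [sub_pos] at hcount
  rw [hcount, Fin.card_filter_univ_eq_card_filter_range fun k => 0 < -(a k * u (k + 1) / u k)]
  exact congrArg card (filter_congr fun k hk =>
    (neg_mul_div_pos_iff (ha k (by simp at hk; omega))).symm)

/-- **Oscillation Theorem (sign-change form).**
Assuming the Dirichlet solution `u` does not vanish at interior integer points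
`1 ≤ j ≤ m-1`, the number of indices `j ∈ {0, …, m-1}` with `u j * u (j+1) < 0`
equals the number of eigenvalues of the `m × m` Jacobi matrix `J`
(counted with multiplicity) that are strictly greater than `E`. -/
theorem oscillation_theorem_sign_changes
    (m : ℕ) (hm : 1 ≤ m) (E : ℝ) (a b : ℕ → ℝ)
    (ha : ∀ n, n ≤ m - 1 → 0 < a n)
    (J : Matrix (Fin m) (Fin m) ℝ)
    (hJ : ∀ i j : Fin m, J i j =
      if (i : ℕ) = (j : ℕ) then b i
      else if (i : ℕ) + 1 = (j : ℕ) then a i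
      else if (j : ℕ) + 1 = (i : ℕ) then a j
      else 0)
    (hHerm : J.IsHermitian)
    (u : ℕ → ℝ) (hu0 : u 0 = 1)
    (hurec : ∀ n, n < m → a n * u (n + 1) =
      (E - b n) * u n - (if n = 0 then 0 else a (n - 1) * u (n - 1)))
    (hnz : ∀ j, 1 ≤ j → j ≤ m - 1 → u j ≠ 0) :
    ((Finset.range m).filter fun j => u j * u (j + 1) < 0).card =
      (Finset.univ.filter fun i : Fin m => E < hHerm.eigenvalues i).card :=
  oscillation_theorem_sign_changes_general m E a b ha J hJ hHerm u hu0 hurec hnz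
end

section
/- The number of zeros of the interpolated Dirichlet solution does not depend on the auxiliary off-diagonal entry: let c, c' > 0 and let u and u' be the Dirichlet solutions obtained from the choices a(m-1) = c and a(m-1) = c' respectively (so u(n) = u'(n) for 0 ≤ n ≤ m-1, while u(m) and u'(m) may differ), with linear interpolations ũ and ũ'. Then the sets {x ∈ (0,m) : ũ(x) = 0} and {x ∈ (0,m) : ũ'(x) = 0} have the same cardinality. -/
/-!
Up to index `m - 1` the Dirichlet solution does not see the auxiliary entry, and the two
choices only rescale the last value: `c * u m = c' * u' m`. Hence `ũ = ũ'` on `[0, m - 1]`.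
On the last cell write `ũ = (1 - t) A + t B` and `ũ' = (1 - s) A + s B'`; if the odds
`s / (1 - s)` are `c' / c` times `t / (1 - t)`, then `ũ'(s)` is a positive multiple of `ũ(t)`.
Rescaling the odds is a bijection of the cell, so the two zero sets are in bijection.
-/

open Set

theorem ncard_sep_eq_of_bijOn {α : Type*} {s : Set α} {P Q : α → Prop} {φ : α → α}
    (hφ : BijOn φ s s) (hPQ : ∀ x ∈ s, Q (φ x) ↔ P x) :
    {x | x ∈ s ∧ P x}.ncard = {x | x ∈ s ∧ Q x}.ncard := by
  refine BijOn.ncard_eq ⟨fun x hx => ⟨hφ.mapsTo hx.1, (hPQ x hx.1).2 hx.2⟩,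
    hφ.injOn.mono fun x hx => hx.1, fun y hy => ?_⟩
  obtain ⟨x, hx, rfl⟩ := hφ.surjOn hy.1
  exact ⟨x, ⟨hx, (hPQ x hx).1 hy.2⟩, rfl⟩

theorem eq_of_recurrence {R : Type*} [MonoidWithZero R] [IsLeftCancelMulZero R] {N : ℕ}
    {p : ℕ → R} {F : ℕ → R → R → R} {u u' : ℕ → R} (hp : ∀ k < N, p k ≠ 0) (h0 : u 0 = u' 0)
    (hu : ∀ k < N, p k * u (k + 1) = F k (u k) (u (k - 1)))
    (hu' : ∀ k < N, p k * u' (k + 1) = F k (u' k) (u' (k - 1))) :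
    ∀ k ≤ N, u k = u' k := by
  intro k
  induction k using Nat.strong_induction_on with
  | _ k ih =>
    cases k with
    | zero => exact fun _ => h0
    | succ k =>
      intro hk
      apply mul_left_cancel₀ (hp k hk)
      rw [hu k hk, hu' k hk, ih k k.lt_succ_self (by omega), ih (k - 1) (by omega) (by omega)]

/-- The self-map of `[0, 1)` multiplying the odds `t / (1 - t)` by `r`. -/
noncomputable def scaleOdds (r t : ℝ) : ℝ := r * t / (r * t + (1 - t))

section scaleOdds

variable {r t : ℝ}

theorem scaleOdds_denom_pos (hr : 0 < r) (ht : t ∈ Ico (0 : ℝ) 1) : 0 < r * t + (1 - t) :=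
  add_pos_of_nonneg_of_pos (mul_nonneg hr.le ht.1) (sub_pos.2 ht.2)

theorem scaleOdds_mem_Ico (hr : 0 < r) (ht : t ∈ Ico (0 : ℝ) 1) :
    scaleOdds r t ∈ Ico (0 : ℝ) 1 := by
  have hd := scaleOdds_denom_pos hr ht
  refine ⟨div_nonneg (mul_nonneg hr.le ht.1) hd.le, (div_lt_one hd).2 ?_⟩
  linarith [ht.2]

theorem scaleOdds_pos (hr : 0 < r) (ht : t ∈ Ioo (0 : ℝ) 1) : 0 < scaleOdds r t :=
  div_pos (mul_pos hr ht.1) (scaleOdds_denom_pos hr (Ioo_subset_Ico_self ht))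

theorem scaleOdds_zero (r : ℝ) : scaleOdds r 0 = 0 := by simp [scaleOdds]

theorem scaleOdds_inv_scaleOdds (hr : 0 < r) (ht : t ∈ Ico (0 : ℝ) 1) :
    scaleOdds r⁻¹ (scaleOdds r t) = t := by
  have hd := (scaleOdds_denom_pos hr ht).ne'
  simp only [scaleOdds]
  field_simp
  ring

theorem lineInterp_scaleOdds (hr : 0 < r) (ht : t ∈ Ico (0 : ℝ) 1) (A B : ℝ) :
    (1 - scaleOdds r t) * A + scaleOdds r t * B =
      ((1 - t) * A + t * (r * B)) / (r * t + (1 - t)) := by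
  have hd := (scaleOdds_denom_pos hr ht).ne'
  simp only [scaleOdds]
  field_simp
  ring

end scaleOdds

noncomputable def scaleOddsOnCell (p r x : ℝ) : ℝ := if x < p then x else p + scaleOdds r (x - p)

section scaleOddsOnCell

variable {p q r x : ℝ}

theorem scaleOddsOnCell_of_lt (h : x < p) : scaleOddsOnCell p r x = x := if_pos h

theorem scaleOddsOnCell_of_le (h : p ≤ x) : scaleOddsOnCell p r x = p + scaleOdds r (x - p) :=
  if_neg h.not_gt

theorem mapsTo_scaleOddsOnCell (hr : 0 < r) (hqp : q ≤ p) :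
    MapsTo (scaleOddsOnCell p r) (Ioo q (p + 1)) (Ioo q (p + 1)) := by
  rintro x ⟨hqx, hxp⟩
  rcases lt_trichotomy x p with hx | rfl | hx
  · rw [scaleOddsOnCell_of_lt hx]
    exact ⟨hqx, hxp⟩
  · rw [scaleOddsOnCell_of_le le_rfl, sub_self, scaleOdds_zero, add_zero]
    exact ⟨hqx, hxp⟩
  · have ht : x - p ∈ Ioo (0 : ℝ) 1 := ⟨sub_pos.2 hx, by linarith⟩
    have hs := scaleOdds_mem_Ico hr (Ioo_subset_Ico_self ht)
    rw [scaleOddsOnCell_of_le hx.le]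
    constructor <;> linarith [hs.2, scaleOdds_pos hr ht]

theorem scaleOddsOnCell_inv_scaleOddsOnCell (hr : 0 < r) (hx : x < p + 1) :
    scaleOddsOnCell p r⁻¹ (scaleOddsOnCell p r x) = x := by
  rcases lt_or_ge x p with hxp | hpx
  · rw [scaleOddsOnCell_of_lt hxp, scaleOddsOnCell_of_lt hxp]
  · have ht : x - p ∈ Ico (0 : ℝ) 1 := ⟨sub_nonneg.2 hpx, by linarith⟩
    rw [scaleOddsOnCell_of_le hpx,
      scaleOddsOnCell_of_le (le_add_of_nonneg_right (scaleOdds_mem_Ico hr ht).1),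
      add_sub_cancel_left, scaleOdds_inv_scaleOdds hr ht, add_sub_cancel]

theorem bijOn_scaleOddsOnCell (hr : 0 < r) (hqp : q ≤ p) :
    BijOn (scaleOddsOnCell p r) (Ioo q (p + 1)) (Ioo q (p + 1)) := by
  refine InvOn.bijOn ⟨fun x hx => scaleOddsOnCell_inv_scaleOddsOnCell hr hx.2, fun x hx => ?_⟩
    (mapsTo_scaleOddsOnCell hr hqp) (mapsTo_scaleOddsOnCell (inv_pos.2 hr) hqp)
  simpa using scaleOddsOnCell_inv_scaleOddsOnCell (inv_pos.2 hr) hx.2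

end scaleOddsOnCell

def IsLinearInterpolation (m : ℕ) (u : ℕ → ℝ) (v : ℝ → ℝ) : Prop :=
  ∀ x : ℝ, 0 ≤ x → x < (m : ℝ) →
    v x = (1 - (x - (⌊x⌋ : ℝ))) * u ⌊x⌋.toNat + (x - (⌊x⌋ : ℝ)) * u (⌊x⌋.toNat + 1)

namespace IsLinearInterpolation

variable {m n : ℕ} {u u' : ℕ → ℝ} {v v' : ℝ → ℝ} {x : ℝ}

theorem eq_of_mem_Ico (hv : IsLinearInterpolation m u v) {k : ℕ} (hk : k < m)
    (hx : x ∈ Ico (k : ℝ) (k + 1)) : v x = (1 - (x - k)) * u k + (x - k) * u (k + 1) := by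
  have hfloor : ⌊x⌋ = k := Int.floor_eq_iff.2 (by exact_mod_cast hx)
  have hxm : x < m := hx.2.trans_le (by exact_mod_cast hk)
  rw [hv x ((Nat.cast_nonneg k).trans hx.1) hxm, hfloor, Int.toNat_natCast, Int.cast_natCast]

theorem eqOn (hv : IsLinearInterpolation m u v) (hv' : IsLinearInterpolation m u' v') {N : ℕ}
    (hN : N ≤ m) (h : ∀ k ≤ N, u k = u' k) : EqOn v v' (Ico 0 N) := by
  rintro x ⟨hx0, hxN⟩
  have hkN : ⌊x⌋₊ < N := (Nat.floor_lt hx0).2 hxN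
  have hx : x ∈ Ico (⌊x⌋₊ : ℝ) (⌊x⌋₊ + 1) := ⟨Nat.floor_le hx0, Nat.lt_floor_add_one x⟩
  rw [hv.eq_of_mem_Ico (by omega) hx, hv'.eq_of_mem_Ico (by omega) hx, h _ hkN.le, h _ hkN]

variable {r : ℝ}

theorem scaleOddsOnCell_eq (hv : IsLinearInterpolation (n + 1) u v)
    (hv' : IsLinearInterpolation (n + 1) u' v') (hr : 0 < r) (hn : u' n = u n)
    (hlast : r * u' (n + 1) = u (n + 1)) (hx : x ∈ Ico (n : ℝ) (n + 1)) :
    v' (scaleOddsOnCell n r x) = v x / (r * (x - n) + (1 - (x - n))) := by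
  have ht : x - n ∈ Ico (0 : ℝ) 1 := ⟨sub_nonneg.2 hx.1, by linarith [hx.2]⟩
  have hs := scaleOdds_mem_Ico hr ht
  rw [scaleOddsOnCell_of_le hx.1,
    hv'.eq_of_mem_Ico n.lt_succ_self ⟨le_add_of_nonneg_right hs.1, by linarith [hs.2]⟩,
    add_sub_cancel_left, lineInterp_scaleOdds hr ht, hn, hlast, hv.eq_of_mem_Ico n.lt_succ_self hx]

theorem scaleOddsOnCell_eq_zero_iff (hv : IsLinearInterpolation (n + 1) u v)
    (hv' : IsLinearInterpolation (n + 1) u' v') (hr : 0 < r) (hagree : ∀ k ≤ n, u k = u' k)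
    (hlast : r * u' (n + 1) = u (n + 1)) (hx : x ∈ Ioo 0 ((n : ℝ) + 1)) :
    v' (scaleOddsOnCell n r x) = 0 ↔ v x = 0 := by
  rcases lt_or_ge x n with hxn | hnx
  · rw [scaleOddsOnCell_of_lt hxn, hv.eqOn hv' n.le_succ hagree ⟨hx.1.le, hxn⟩]
  · have ht : x - n ∈ Ico (0 : ℝ) 1 := ⟨sub_nonneg.2 hnx, by linarith [hx.2]⟩
    rw [hv.scaleOddsOnCell_eq hv' hr (hagree n le_rfl).symm hlast ⟨hnx, hx.2⟩, div_eq_zero_iff,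
      or_iff_left (scaleOdds_denom_pos hr ht).ne']

end IsLinearInterpolation

theorem interpolated_zero_count_independent_of_auxiliary_entry_general
    (m : ℕ) (hm : 1 ≤ m) (E : ℝ) (a b : ℕ → ℝ)
    (ha : ∀ n, n ≤ m - 2 → 0 < a n)
    (c c' : ℝ) (hc : 0 < c) (hc' : 0 < c')
    (u u' : ℕ → ℝ) (hu0 : u 0 = 1) (hu'0 : u' 0 = 1)
    (hurec : ∀ n, n < m → (if n = m - 1 then c else a n) * u (n + 1) =
      (E - b n) * u n - (if n = 0 then 0 else a (n - 1) * u (n - 1)))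
    (hu'rec : ∀ n, n < m → (if n = m - 1 then c' else a n) * u' (n + 1) =
      (E - b n) * u' n - (if n = 0 then 0 else a (n - 1) * u' (n - 1)))
    (v v' : ℝ → ℝ)
    (hv : ∀ x : ℝ, 0 ≤ x → x < (m : ℝ) →
      v x = (1 - (x - (⌊x⌋ : ℝ))) * u ⌊x⌋.toNat + (x - (⌊x⌋ : ℝ)) * u (⌊x⌋.toNat + 1))
    (hv' : ∀ x : ℝ, 0 ≤ x → x < (m : ℝ) →
      v' x = (1 - (x - (⌊x⌋ : ℝ))) * u' ⌊x⌋.toNat + (x - (⌊x⌋ : ℝ)) * u' (⌊x⌋.toNat + 1)) :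
    {x : ℝ | 0 < x ∧ x < (m : ℝ) ∧ v x = 0}.ncard =
      {x : ℝ | 0 < x ∧ x < (m : ℝ) ∧ v' x = 0}.ncard := by
  obtain ⟨n, rfl⟩ : ∃ n, m = n + 1 := ⟨m - 1, by omega⟩
  have hagree : ∀ k ≤ n, u k = u' k :=
    eq_of_recurrence (F := fun k x y => (E - b k) * x - if k = 0 then 0 else a (k - 1) * y)
      (fun k _ => (ha k (by omega)).ne') (hu0.trans hu'0.symm)
      (fun k hk => by simpa [hk.ne] using hurec k (by omega))
      (fun k hk => by simpa [hk.ne] using hu'rec k (by omega))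
  have hlast : c' / c * u' (n + 1) = u (n + 1) := by
    have h := hurec n n.lt_succ_self
    have h' := hu'rec n n.lt_succ_self
    simp only [add_tsub_cancel_right, if_true, hagree n le_rfl, hagree (n - 1) (by omega)] at h h'
    field_simp
    linarith
  have hr : 0 < c' / c := div_pos hc' hc
  have := ncard_sep_eq_of_bijOn (P := fun x => v x = 0) (Q := fun x => v' x = 0)
    (bijOn_scaleOddsOnCell hr (Nat.cast_nonneg (α := ℝ) n)) fun _ hx =>
      IsLinearInterpolation.scaleOddsOnCell_eq_zero_iff hv hv' hr hagree hlast hx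
  simpa [and_assoc] using this

/-- The number of zeros of the interpolated Dirichlet solution in `(0, m)` does not
depend on the auxiliary off-diagonal entry `a (m-1)`: if `u` and `u'` are the Dirichlet
solutions obtained from the choices `a (m-1) = c` and `a (m-1) = c'` respectively
(`c, c' > 0`), with linear interpolations `v` and `v'`, then the zero sets of `v` and
`v'` in `(0, m)` have the same cardinality. -/
theorem interpolated_zero_count_independent_of_auxiliary_entry
    (m : ℕ) (hm : 1 ≤ m) (E : ℝ) (a b : ℕ → ℝ)
    (ha : ∀ n, n ≤ m - 2 → 0 < a n)
    (c c' : ℝ) (hc : 0 < c) (hc' : 0 < c')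
    (u u' : ℕ → ℝ) (hu0 : u 0 = 1) (hu'0 : u' 0 = 1)
    (hurec : ∀ n, n < m → (if n = m - 1 then c else a n) * u (n + 1) =
      (E - b n) * u n - (if n = 0 then 0 else a (n - 1) * u (n - 1)))
    (hu'rec : ∀ n, n < m → (if n = m - 1 then c' else a n) * u' (n + 1) =
      (E - b n) * u' n - (if n = 0 then 0 else a (n - 1) * u' (n - 1)))
    (v v' : ℝ → ℝ)
    (hv : ∀ x : ℝ, 0 ≤ x → x < (m : ℝ) →
      v x = (1 - (x - (⌊x⌋ : ℝ))) * u ⌊x⌋.toNat + (x - (⌊x⌋ : ℝ)) * u (⌊x⌋.toNat + 1))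
    (hvm : v (m : ℝ) = u m)
    (hv' : ∀ x : ℝ, 0 ≤ x → x < (m : ℝ) →
      v' x = (1 - (x - (⌊x⌋ : ℝ))) * u' ⌊x⌋.toNat + (x - (⌊x⌋ : ℝ)) * u' (⌊x⌋.toNat + 1))
    (hv'm : v' (m : ℝ) = u' m) :
    {x : ℝ | 0 < x ∧ x < (m : ℝ) ∧ v x = 0}.ncard =
      {x : ℝ | 0 < x ∧ x < (m : ℝ) ∧ v' x = 0}.ncard :=
  interpolated_zero_count_independent_of_auxiliary_entry_general m hm E a b ha c c' hc hc' u u' hu0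
    hu'0 hurec hu'rec v v' hv hv'
end

section
/- With the notation below, the Dirichlet solution satisfies u(m) = 0 if and only if E is an eigenvalue of the real symmetric matrix J_m. -/
/-!
Rows `0, …, m - 2` of `J x = E x` are the three-term recurrence, which determines `x` from
`x 0` because every `a n` is nonzero. Hence each eigenvector is a nonzero multiple of
`(u 0, …, u (m - 1))`, and the last row of the eigenvalue equation holds for it exactly when
`u m = 0`.
-/

open Matrix Finset

theorem Matrix.mem_spectrum_iff_exists_mulVec_eq_smul {n K : Type*} [Fintype n] [DecidableEq n]
    [Field K] (A : Matrix n n K) (μ : K) :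
    μ ∈ spectrum K A ↔ ∃ v ≠ 0, A *ᵥ v = μ • v := by
  rw [← Matrix.spectrum_toLin', ← Module.End.hasEigenvalue_iff_mem_spectrum]
  constructor
  · intro h
    obtain ⟨v, hv⟩ := h.exists_hasEigenvector
    exact ⟨v, hv.2, by simpa using hv.apply_eq_smul⟩
  · rintro ⟨v, hv, h⟩
    exact Module.End.hasEigenvalue_of_hasEigenvector
      ⟨Module.End.mem_eigenspace_iff.mpr (by simpa using h), hv⟩

section Jacobi

variable {R : Type*} [CommRing R]

def jacobiMatrix (m : ℕ) (a b : ℕ → R) : Matrix (Fin m) (Fin m) R :=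
  Matrix.of fun i j =>
    if (i : ℕ) = (j : ℕ) then b i
    else if (i : ℕ) + 1 = (j : ℕ) then a i
    else if (j : ℕ) + 1 = (i : ℕ) then a j
    else 0

/-- Row `n` of `J w = E w` for a sequence `w` on `ℕ`, with the convention `w (-1) = 0`. -/
def IsJacobiSolutionAt (a b : ℕ → R) (E : R) (w : ℕ → R) (n : ℕ) : Prop :=
  a n * w (n + 1) = (E - b n) * w n - (if n = 0 then 0 else a (n - 1) * w (n - 1))

theorem IsJacobiSolutionAt.sub_smul {a b w v : ℕ → R} {E : R} {n : ℕ}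
    (hw : IsJacobiSolutionAt a b E w n) (hv : IsJacobiSolutionAt a b E v n) (c : R) :
    IsJacobiSolutionAt a b E (w - c • v) n := by
  unfold IsJacobiSolutionAt at *
  split_ifs at * <;> simp only [Pi.sub_apply, Pi.smul_apply, smul_eq_mul] <;>
    linear_combination hw - c * hv

theorem IsJacobiSolutionAt.apply_eq_zero_of_apply_zero [NoZeroDivisors R]
    {a b w : ℕ → R} {E : R} {k : ℕ} (ha : ∀ n < k, a n ≠ 0)
    (hw : ∀ n < k, IsJacobiSolutionAt a b E w n)
    (h0 : w 0 = 0) : ∀ n ≤ k, w n = 0 := by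
  intro n
  induction n using Nat.strong_induction_on with
  | _ n ih =>
    intro hn
    rcases n with _ | n
    · exact h0
    · have hrow := hw n (by omega)
      have hprev : w n = 0 := ih n (by omega) (by omega)
      have hprev' : w (n - 1) = 0 := ih (n - 1) (by omega) (by omega)
      simp only [IsJacobiSolutionAt, hprev, hprev', mul_zero, ite_self, sub_zero] at hrow
      exact (mul_eq_zero.mp hrow).resolve_left (ha n (by omega))

theorem jacobiMatrix_mulVec_apply {m : ℕ} (a b w : ℕ → R) (hw : w m = 0) (i : Fin m) :
    (jacobiMatrix m a b *ᵥ fun j => w j) i =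
      a i * w (i + 1) + b i * w i + (if (i : ℕ) = 0 then 0 else a (i - 1) * w (i - 1)) := by
  have hentry : ∀ k : ℕ, (if (i : ℕ) = k then b i
      else if (i : ℕ) + 1 = k then a i
      else if k + 1 = (i : ℕ) then a k else 0) * w k =
      (if k = i then b i * w i else 0) + (if k = i + 1 then a i * w (i + 1) else 0) +
      (if k + 1 = i then a k * w k else 0) := by
    intro k
    split_ifs <;> first | (exfalso; omega) | (subst_vars; ring)
  simp only [mulVec, dotProduct, jacobiMatrix, of_apply]
  rw [Fin.sum_univ_eq_sum_range (fun k => (if (i : ℕ) = k then b i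
      else if (i : ℕ) + 1 = k then a i
      else if k + 1 = (i : ℕ) then a k else 0) * w k), Finset.sum_congr rfl fun k _ => hentry k]
  simp only [sum_add_distrib, sum_ite_eq', mem_range, i.isLt, if_true]
  have hsucc : (if (i : ℕ) + 1 < m then a i * w (i + 1) else 0) = a i * w (i + 1) := by
    split_ifs with h
    · rfl
    · rw [show (i : ℕ) + 1 = m by omega, hw, mul_zero]
  clear hentry
  obtain ⟨_ | j, hj⟩ := i
  · simp only [zero_add, hsucc, Nat.add_eq_zero_iff, one_ne_zero, and_false, ↓reduceIte,
      sum_const_zero, add_zero]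
    ring
  · simp only [hsucc, Nat.add_right_cancel_iff, sum_ite_eq', mem_range, show j < m by omega,
      ↓reduceIte, Nat.add_eq_zero_iff, one_ne_zero, and_false, add_tsub_cancel_right]
    ring

theorem jacobiMatrix_mulVec_eq_smul_iff {m : ℕ} {a b w : ℕ → R} {E : R} (hw : w m = 0) :
    (jacobiMatrix m a b *ᵥ fun j => w j) = E • (fun j : Fin m => w j) ↔
      ∀ n < m, IsJacobiSolutionAt a b E w n := by
  simp only [funext_iff, Fin.forall_iff, jacobiMatrix_mulVec_apply a b w hw, Pi.smul_apply,
    smul_eq_mul, IsJacobiSolutionAt]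
  refine forall₂_congr fun n _ => ⟨fun h => ?_, fun h => ?_⟩ <;> linear_combination h

end Jacobi

/-- The Dirichlet solution satisfies `u m = 0` if and only if `E` is an eigenvalue
of the `m × m` real symmetric Jacobi matrix `J`. -/
theorem dirichlet_solution_vanishes_iff_eigenvalue
    (m : ℕ) (hm : 1 ≤ m) (E : ℝ) (a b : ℕ → ℝ)
    (ha : ∀ n, n ≤ m - 1 → 0 < a n)
    (J : Matrix (Fin m) (Fin m) ℝ)
    (hJ : ∀ i j : Fin m, J i j =
      if (i : ℕ) = (j : ℕ) then b i
      else if (i : ℕ) + 1 = (j : ℕ) then a i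
      else if (j : ℕ) + 1 = (i : ℕ) then a j
      else 0)
    (u : ℕ → ℝ) (hu0 : u 0 = 1)
    (hurec : ∀ n, n < m → a n * u (n + 1) =
      (E - b n) * u n - (if n = 0 then 0 else a (n - 1) * u (n - 1))) :
    u m = 0 ↔ E ∈ spectrum ℝ J := by
  obtain rfl : J = jacobiMatrix m a b := Matrix.ext hJ
  have ha' : ∀ n < m, a n ≠ 0 := fun n hn => (ha n (by omega)).ne'
  rw [Matrix.mem_spectrum_iff_exists_mulVec_eq_smul]
  constructor
  · intro hum
    refine ⟨fun j => u j, fun h => ?_, (jacobiMatrix_mulVec_eq_smul_iff hum).2 hurec⟩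
    simpa [hu0] using congrFun h ⟨0, hm⟩
  · rintro ⟨v, hv, hJv⟩
    set w : ℕ → ℝ := fun n => if h : n < m then v ⟨n, h⟩ else 0
    have hvw : (fun j : Fin m => w j) = v := funext fun j => dif_pos j.isLt
    rw [← hvw] at hv hJv
    have hwm : w m = 0 := dif_neg (lt_irrefl m)
    have hw := (jacobiMatrix_mulVec_eq_smul_iff hwm).1 hJv
    have hw0 : w 0 ≠ 0 := fun h0 =>
      hv (funext fun j => IsJacobiSolutionAt.apply_eq_zero_of_apply_zero ha' hw h0 j j.isLt.le)
    have hdiff := IsJacobiSolutionAt.apply_eq_zero_of_apply_zero ha'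
      (fun n hn => (hw n hn).sub_smul (hurec n hn) (w 0)) (by simp [hu0]) m le_rfl
    simpa [hwm, hw0] using hdiff
end

section
/- Unstable section at zeros of the off-diagonal sampling function. Let T : Ω → Ω be a bijection, E ∈ ℝ, q : Ω → ℝ, p : Ω → ℂ, and let B^E : Ω → M₂(ℂ) be the Jacobi cocycle B^E(ω) = [[E - q(ω), -conj(p(T⁻¹ω))], [p(ω), 0]]. Suppose (T, B^E) admits a dominated splitting Eˢ, Eᵘ. If ω ∈ Ω satisfies p(ω) = 0, then Eᵘ(Tω) = ℂ·(1,0)ᵀ, the span of the first standard basis vector of ℂ². -/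
/-- Iterates of the cocycle `(T, B)`: `B₀(ω) = I` and
`B_{n+1}(ω) = B(Tⁿω) ⬝ B_n(ω)`. -/
noncomputable def cocycleIter {Ω : Type*} (T : Ω → Ω) (B : Ω → Matrix (Fin 2) (Fin 2) ℂ) :
    ℕ → Ω → Matrix (Fin 2) (Fin 2) ℂ
  | 0, _ => 1
  | n + 1, ω => B (T^[n] ω) * cocycleIter T B n ω

/-- A dominated splitting for `(T, B)`: two maps `Es, Eu` from `Ω` into the
one-dimensional subspaces of `ℂ²` (with the Euclidean norm) that are invariant
under the cocycle and such that some iterate uniformly expands the unstable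
direction relative to the stable one. -/
structure DominatedSplitting {Ω : Type*} (T : Ω → Ω) (B : Ω → Matrix (Fin 2) (Fin 2) ℂ)
    (Es Eu : Ω → Submodule ℂ (EuclideanSpace ℂ (Fin 2))) : Prop where
  finrank_s : ∀ ω, Module.finrank ℂ (Es ω) = 1
  finrank_u : ∀ ω, Module.finrank ℂ (Eu ω) = 1
  invariant_s : ∀ ω, (Es ω).map (Matrix.toEuclideanLin (B ω)) ≤ Es (T ω)
  invariant_u : ∀ ω, (Eu ω).map (Matrix.toEuclideanLin (B ω)) ≤ Eu (T ω)
  dominates : ∃ (N : ℕ) (ρ : ℝ), 1 < ρ ∧ ∀ ω, ∀ u ∈ Eu ω, ∀ s ∈ Es ω,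
    ‖u‖ = 1 → ‖s‖ = 1 →
      ρ * ‖Matrix.toEuclideanLin (cocycleIter T B N ω) s‖ <
        ‖Matrix.toEuclideanLin (cocycleIter T B N ω) u‖

/-! When `p ω = 0` the second row of `B ω` vanishes, so `B ω` maps `ℂ²` into the line `ℂ e₀`.
Domination forbids `B ω` from killing `Eᵘ ω`: an iterate `B_N ω` with `N ≥ 1` factors through
`B ω`, and `N = 0` is impossible since `ρ > 1`. Hence the image of a nonzero vector of `Eᵘ ω` is a
nonzero vector lying on both lines `Eᵘ (T ω)` and `ℂ e₀`, which therefore coincide. -/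

theorem cocycleIter_succ' {Ω : Type*} (T : Ω → Ω) (B : Ω → Matrix (Fin 2) (Fin 2) ℂ)
    (n : ℕ) (ω : Ω) :
    cocycleIter T B (n + 1) ω = cocycleIter T B n (T ω) * B ω := by
  induction n generalizing ω with
  | zero => simp [cocycleIter]
  | succ m ih =>
    rw [cocycleIter, ih, Function.iterate_succ_apply, ← mul_assoc]
    rfl

theorem Submodule.exists_norm_eq_one_of_ne_bot {𝕜 V : Type*} [RCLike 𝕜] [NormedAddCommGroup V]
    [NormedSpace 𝕜 V] {W : Submodule 𝕜 V} (hW : W ≠ ⊥) : ∃ v ∈ W, ‖v‖ = 1 := by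
  obtain ⟨x, hxW, hx0⟩ := W.exists_mem_ne_zero_of_ne_bot hW
  refine ⟨(‖x‖⁻¹ : 𝕜) • x, W.smul_mem _ hxW, ?_⟩
  simp [norm_smul, norm_ne_zero_iff.mpr hx0]

theorem Submodule.ne_bot_of_finrank_eq_one {K V : Type*} [DivisionRing K] [AddCommGroup V]
    [Module K V] {W : Submodule K V} (hW : Module.finrank K W = 1) : W ≠ ⊥ := by
  rintro rfl
  simp at hW

theorem Submodule.eq_span_singleton_of_finrank_eq_one {K V : Type*} [DivisionRing K]
    [AddCommGroup V] [Module K V] {W : Submodule K V} (hW : Module.finrank K W = 1)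
    {v : V} (hvW : v ∈ W) (hv : v ≠ 0) : W = span K {v} := by
  have : FiniteDimensional K W := Module.finite_of_finrank_eq_succ hW
  refine (eq_of_le_of_finrank_eq (span_le.mpr (Set.singleton_subset_iff.mpr hvW)) ?_).symm
  rw [finrank_span_singleton hv, hW]

theorem Matrix.toEuclideanLin_apply_mem_span_single_zero {𝕜 : Type*} [RCLike 𝕜]
    (M : Matrix (Fin 2) (Fin 2) 𝕜) (hM : ∀ j, M 1 j = 0) (x : EuclideanSpace 𝕜 (Fin 2)) :
    M.toEuclideanLin x ∈ Submodule.span 𝕜 {EuclideanSpace.single 0 1} := by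
  refine Submodule.mem_span_singleton.mpr ⟨M.toEuclideanLin x 0, ?_⟩
  ext i
  fin_cases i
  · simp
  · simp [Matrix.mulVec, dotProduct, hM]

namespace DominatedSplitting

variable {Ω : Type*} {T : Ω → Ω} {B : Ω → Matrix (Fin 2) (Fin 2) ℂ}
  {Es Eu : Ω → Submodule ℂ (EuclideanSpace ℂ (Fin 2))}

theorem apply_ne_zero_of_mem_unstable (hDS : DominatedSplitting T B Es Eu) {ω : Ω}
    {u : EuclideanSpace ℂ (Fin 2)} (hu : u ∈ Eu ω) (hu1 : ‖u‖ = 1) :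
    Matrix.toEuclideanLin (B ω) u ≠ 0 := by
  obtain ⟨N, ρ, hρ, hdom⟩ := hDS.dominates
  obtain ⟨s, hs, hs1⟩ :=
    Submodule.exists_norm_eq_one_of_ne_bot (Submodule.ne_bot_of_finrank_eq_one (hDS.finrank_s ω))
  have hgap := hdom ω u hu s hs hu1 hs1
  cases N with
  | zero =>
    simp only [cocycleIter, Matrix.toLpLin_one, LinearMap.id_apply, hu1, hs1] at hgap
    linarith
  | succ m =>
    intro h0
    simp only [cocycleIter_succ', Matrix.toLpLin_mul_same, LinearMap.comp_apply, h0, map_zero,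
      norm_zero] at hgap
    exact hgap.not_ge (by positivity)

end DominatedSplitting

/-- **Unstable section at zeros of the off-diagonal sampling function.**
For the Jacobi cocycle `B^E(ω) = [[E - q(ω), -conj(p(T⁻¹ω))], [p(ω), 0]]` over a
bijection `T`, if `(T, B^E)` admits a dominated splitting and `p(ω) = 0`, then
`Eᵘ(Tω)` is the span of the first standard basis vector of `ℂ²`. -/
theorem unstable_section_at_zero_of_offdiagonal {Ω : Type*} (T : Ω ≃ Ω)
    (E : ℝ) (q : Ω → ℝ) (p : Ω → ℂ)
    (B : Ω → Matrix (Fin 2) (Fin 2) ℂ)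
    (hB : ∀ ω, B ω = !![(E : ℂ) - (q ω : ℂ), -(starRingEnd ℂ) (p (T.symm ω)); p ω, 0])
    (Es Eu : Ω → Submodule ℂ (EuclideanSpace ℂ (Fin 2)))
    (hDS : DominatedSplitting (⇑T) B Es Eu)
    (ω : Ω) (hp : p ω = 0) :
    Eu (T ω) = Submodule.span ℂ {EuclideanSpace.single (0 : Fin 2) (1 : ℂ)} := by
  obtain ⟨u, hu, hu1⟩ :=
    Submodule.exists_norm_eq_one_of_ne_bot (Submodule.ne_bot_of_finrank_eq_one (hDS.finrank_u ω))
  set v := Matrix.toEuclideanLin (B ω) u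
  have hv0 : v ≠ 0 := hDS.apply_ne_zero_of_mem_unstable hu hu1
  have hvEu : v ∈ Eu (T ω) := hDS.invariant_u ω ⟨u, hu, rfl⟩
  have hve : v ∈ Submodule.span ℂ {EuclideanSpace.single (0 : Fin 2) (1 : ℂ)} :=
    Matrix.toEuclideanLin_apply_mem_span_single_zero _ (fun j ↦ by fin_cases j <;> simp [hB, hp]) u
  have he : Module.finrank ℂ (Submodule.span ℂ {EuclideanSpace.single (0 : Fin 2) (1 : ℂ)}) = 1 :=
    finrank_span_singleton (by simp)
  rw [Submodule.eq_span_singleton_of_finrank_eq_one (hDS.finrank_u _) hvEu hv0,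
    Submodule.eq_span_singleton_of_finrank_eq_one he hve hv0]
end

section
/- Spectra of finite blocks are contained in the spectrum of a whole-line Jacobi operator. Let a : ℤ → ℂ and b : ℤ → ℝ be bounded, and let J be a bounded linear operator on ℓ²(ℤ;ℂ) satisfying (Ju)(n) = conj(a(n-1))·u(n-1) + b(n)·u(n) + a(n)·u(n+1) for every u ∈ ℓ²(ℤ;ℂ) and every n ∈ ℤ. Suppose n₀ < n₁ are integers with a(n₀) = 0 and a(n₁) = 0. Let ℓ = n₁ - n₀ and let J_r be the ℓ × ℓ complex matrix with entries (J_r)_{ij} = b(n₀+1+i) if i = j, (J_r)_{ij} = a(n₀+1+i) if j = i+1, (J_r)_{ij} = conj(a(n₀+1+j)) if i = j+1, and 0 otherwise (0 ≤ i, j ≤ ℓ-1). Then every element of the spectrum of the matrix J_r belongs to the spectrum of the operator J. -/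
/-- **Spectra of finite blocks are contained in the spectrum of a whole-line Jacobi
operator.** If `a(n₀) = a(n₁) = 0` with `n₀ < n₁`, then the spectrum of the
`ℓ × ℓ` block `J_r` (`ℓ = n₁ - n₀`) of the Jacobi operator `J` obtained by
restriction to `[n₀+1, n₁]` is contained in the spectrum of `J`. -/
theorem finite_block_spectrum_subset
    (a : ℤ → ℂ) (b : ℤ → ℝ)
    (hbd : ∃ C : ℝ, ∀ n : ℤ, ‖a n‖ ≤ C ∧ |b n| ≤ C)
    (J : lp (fun _ : ℤ => ℂ) 2 →L[ℂ] lp (fun _ : ℤ => ℂ) 2)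
    (hJ : ∀ (u : lp (fun _ : ℤ => ℂ) 2) (n : ℤ),
      (J u) n = (starRingEnd ℂ) (a (n - 1)) * u (n - 1) + (b n : ℂ) * u n
        + a n * u (n + 1))
    (n₀ n₁ : ℤ) (h01 : n₀ < n₁) (ha₀ : a n₀ = 0) (ha₁ : a n₁ = 0)
    (ℓ : ℕ) (hℓ : (ℓ : ℤ) = n₁ - n₀)
    (Jr : Matrix (Fin ℓ) (Fin ℓ) ℂ)
    (hJr : ∀ i j : Fin ℓ, Jr i j =
      if (i : ℕ) = (j : ℕ) then (b (n₀ + 1 + (i : ℕ)) : ℂ)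
      else if (i : ℕ) + 1 = (j : ℕ) then a (n₀ + 1 + (i : ℕ))
      else if (j : ℕ) + 1 = (i : ℕ) then (starRingEnd ℂ) (a (n₀ + 1 + (j : ℕ)))
      else 0) :
    spectrum ℂ Jr ⊆ spectrum ℂ J := by
  intro μ hμ
  have hℓpos : 0 < ℓ := by omega
  rw [spectrum.mem_iff] at hμ
  -- extract an eigenvector of Jr
  have hdet : ((algebraMap ℂ (Matrix (Fin ℓ) (Fin ℓ) ℂ) μ) - Jr).det = 0 := by
    by_contra h
    exact hμ ((Matrix.isUnit_iff_isUnit_det _).2 (isUnit_iff_ne_zero.2 h))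
  obtain ⟨v, hv0, hv⟩ := Matrix.exists_mulVec_eq_zero_iff.mpr hdet
  have heig : ∀ i, ∑ j, Jr i j * v j = μ * v i := by
    intro i
    have := congrFun hv i
    simp only [Matrix.mulVec, dotProduct, Pi.zero_apply,
      Matrix.sub_apply, Matrix.algebraMap_matrix_apply, sub_mul,
      Finset.sum_sub_distrib, sub_eq_zero, ite_mul, zero_mul,
      Finset.sum_ite_eq, Finset.mem_univ, if_true] at this
    exact this.symm
  -- the extended vector on ℤ
  set idx : Fin ℓ → ℤ := fun i => n₀ + 1 + (i : ℕ) with hidx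
  have hidx_inj : Function.Injective idx := by
    intro i j h
    simp only [hidx] at h
    have : ((i : ℕ) : ℤ) = ((j : ℕ) : ℤ) := by omega
    exact Fin.ext (by exact_mod_cast this)
  set vv : ℤ → ℂ := fun n => ∑ i : Fin ℓ, if n = idx i then v i else 0 with hvv
  have vv_idx : ∀ i : Fin ℓ, vv (idx i) = v i := by
    intro i
    simp only [hvv]
    rw [Finset.sum_eq_single i]
    · simp
    · intro j _ hj
      rw [if_neg (fun h => hj (hidx_inj h.symm))]
    · intro h; exact absurd (Finset.mem_univ i) h
  have vv_out : ∀ n : ℤ, (n < n₀ + 1 ∨ n₁ < n) → vv n = 0 := by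
    intro n hn
    rw [hvv]
    apply Finset.sum_eq_zero
    intro i _
    rw [if_neg]
    intro h
    have hi : (i : ℕ) < ℓ := i.isLt
    simp only [hidx] at h
    omega
  set u : lp (fun _ : ℤ => ℂ) 2 := ∑ i : Fin ℓ, lp.single 2 (idx i) (v i) with hu
  have huapp : ∀ n : ℤ, (u : ℤ → ℂ) n = vv n := by
    intro n
    rw [hu, hvv]
    rw [lp.coeFn_sum]
    simp only [Finset.sum_apply]
    apply Finset.sum_congr rfl
    intro i _
    by_cases h : n = idx i
    · subst h; simp [lp.single_apply_self]
    · simp [lp.single_apply, h]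
  -- u ≠ 0
  have hune : u ≠ 0 := by
    intro h
    apply hv0
    funext i
    have := congrFun (congrArg (fun f : lp (fun _ : ℤ => ℂ) 2 => (f : ℤ → ℂ)) h) (idx i)
    simp only [lp.coeFn_zero, Pi.zero_apply] at this
    rw [huapp, vv_idx] at this
    exact this
  -- the three-term recurrence for vv
  have key : ∀ n : ℤ, (starRingEnd ℂ) (a (n - 1)) * vv (n - 1) + (b n : ℂ) * vv n
      + a n * vv (n + 1) = μ * vv n := by
    intro n
    by_cases hn : n₀ + 1 ≤ n ∧ n ≤ n₁
    · -- inside the block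
      obtain ⟨i, hni⟩ : ∃ i : Fin ℓ, n = n₀ + 1 + ((i : ℕ) : ℤ) :=
        ⟨⟨(n - (n₀ + 1)).toNat, by omega⟩, by simp; omega⟩
      have hilt : (i : ℕ) < ℓ := i.isLt
      have hvvn : vv n = v i := by
        have : n = idx i := by simp only [hidx]; omega
        rw [this, vv_idx]
      rw [hvvn, ← heig i]
      have hsplit : ∀ j : Fin ℓ, Jr i j * v j =
          (if (i : ℕ) = (j : ℕ) then (b (n₀ + 1 + (i : ℕ)) : ℂ) * v j else 0)
          + (if (i : ℕ) + 1 = (j : ℕ) then a (n₀ + 1 + (i : ℕ)) * v j else 0)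
          + (if (j : ℕ) + 1 = (i : ℕ) then (starRingEnd ℂ) (a (n₀ + 1 + (j : ℕ))) * v j
            else 0) := by
        intro j
        rw [hJr]
        split_ifs with h1 h2 h3 <;> first | ring1 | (exfalso; omega)
      rw [Finset.sum_congr rfl (fun j _ => hsplit j)]
      rw [Finset.sum_add_distrib, Finset.sum_add_distrib]
      have hS1 : ∑ j : Fin ℓ, (if (i : ℕ) = (j : ℕ) then (b (n₀ + 1 + (i : ℕ)) : ℂ) * v j
          else 0) = (b n : ℂ) * v i := by
        rw [Finset.sum_eq_single i]
        · rw [if_pos rfl, show n₀ + 1 + ((i : ℕ) : ℤ) = n by omega]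
        · intro j _ hj
          exact if_neg (fun h => hj (Fin.ext h.symm))
        · intro h; exact absurd (Finset.mem_univ i) h
      have hS2 : ∑ j : Fin ℓ, (if (i : ℕ) + 1 = (j : ℕ) then a (n₀ + 1 + (i : ℕ)) * v j
          else 0) = a n * vv (n + 1) := by
        have han : a (n₀ + 1 + (i : ℕ)) = a n := by rw [show n₀ + 1 + ((i : ℕ) : ℤ) = n by omega]
        by_cases hlt : (i : ℕ) + 1 < ℓ
        · obtain ⟨j', hj'v⟩ : ∃ j' : Fin ℓ, (j' : ℕ) = (i : ℕ) + 1 := ⟨⟨(i : ℕ) + 1, hlt⟩, rfl⟩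
          have hvv1 : vv (n + 1) = v j' := by
            have : n + 1 = idx j' := by simp only [hidx]; omega
            rw [this, vv_idx]
          rw [hvv1, han, Finset.sum_eq_single j']
          · rw [if_pos (by omega)]
          · intro j _ hj
            exact if_neg (fun h => hj (Fin.ext (by omega)))
          · intro h; exact absurd (Finset.mem_univ j') h
        · have hvv1 : vv (n + 1) = 0 := vv_out _ (by omega)
          rw [hvv1, mul_zero]
          apply Finset.sum_eq_zero
          intro j _
          exact if_neg (by have := j.isLt; omega)
      have hS3 : ∑ j : Fin ℓ, (if (j : ℕ) + 1 = (i : ℕ) then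
          (starRingEnd ℂ) (a (n₀ + 1 + (j : ℕ))) * v j else 0)
          = (starRingEnd ℂ) (a (n - 1)) * vv (n - 1) := by
        by_cases hpos : 0 < (i : ℕ)
        · obtain ⟨j', hj'v⟩ : ∃ j' : Fin ℓ, (j' : ℕ) + 1 = (i : ℕ) :=
            ⟨⟨(i : ℕ) - 1, by omega⟩, by simp; omega⟩
          have ha' : a (n₀ + 1 + (j' : ℕ)) = a (n - 1) := by rw [show n₀ + 1 + ((j' : ℕ) : ℤ) = n - 1 by omega]
          have hvv1 : vv (n - 1) = v j' := by
            have : n - 1 = idx j' := by simp only [hidx]; omega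
            rw [this, vv_idx]
          rw [hvv1, Finset.sum_eq_single j']
          · rw [if_pos hj'v, ha']
          · intro j _ hj
            exact if_neg (fun h => hj (Fin.ext (by omega)))
          · intro h; exact absurd (Finset.mem_univ j') h
        · have hn1 : n - 1 = n₀ := by omega
          rw [hn1, ha₀, map_zero, zero_mul]
          apply Finset.sum_eq_zero
          intro j _
          exact if_neg (by omega)
      rw [hS1, hS2, hS3]
      ring
    · -- outside the block: everything vanishes
      have hvvn : vv n = 0 := vv_out _ (by omega)
      have h1 : (starRingEnd ℂ) (a (n - 1)) * vv (n - 1) = 0 := by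
        by_cases h : n = n₁ + 1
        · have : n - 1 = n₁ := by omega
          rw [this, ha₁, map_zero, zero_mul]
        · rw [vv_out (n - 1) (by omega), mul_zero]
      have h3 : a n * vv (n + 1) = 0 := by
        by_cases h : n = n₀
        · rw [h, ha₀, zero_mul]
        · rw [vv_out (n + 1) (by omega), mul_zero]
      rw [hvvn, h1, h3]
      ring
  -- hence J u = μ • u
  have hJu : J u = μ • u := by
    apply lp.ext
    funext n
    rw [hJ u n]
    have hs : ((μ • u : lp (fun _ : ℤ => ℂ) 2) : ℤ → ℂ) n = μ * (u : ℤ → ℂ) n := by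
      rw [lp.coeFn_smul]; rfl
    rw [hs]
    simp only [huapp]
    exact key n
  -- conclude μ ∈ spectrum J
  rw [spectrum.mem_iff]
  intro hunit
  obtain ⟨φ, hφ⟩ := hunit
  have hTu : (algebraMap ℂ (lp (fun _ : ℤ => ℂ) 2 →L[ℂ] lp (fun _ : ℤ => ℂ) 2) μ - J) u = 0 := by
    simp only [ContinuousLinearMap.sub_apply, Algebra.algebraMap_eq_smul_one,
      ContinuousLinearMap.smul_apply, ContinuousLinearMap.one_apply, hJu, sub_self]
  apply hune
  have h2 := congrArg
    (fun T : lp (fun _ : ℤ => ℂ) 2 →L[ℂ] lp (fun _ : ℤ => ℂ) 2 => T u) φ.inv_mul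
  simp only [ContinuousLinearMap.mul_apply, ContinuousLinearMap.one_apply] at h2
  rw [hφ, hTu, map_zero] at h2
  exact h2.symm
end

section
/- Injectivity of the solenoid map. Fix λ ∈ ℝ with 0 < λ < 1/2. For all ω₁, ω₂ ∈ ℝ and all (x₁,y₁), (x₂,y₂) ∈ ℝ² with x₁² + y₁² ≤ 1 and x₂² + y₂² ≤ 1: if 2ω₁ - 2ω₂ ∈ ℤ, λx₁ + (1/2)·cos(2πω₁) = λx₂ + (1/2)·cos(2πω₂), and λy₁ + (1/2)·sin(2πω₁) = λy₂ + (1/2)·sin(2πω₂), then ω₁ - ω₂ ∈ ℤ, x₁ = x₂, and y₁ = y₂. -/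
open Real

/-- **Injectivity of the solenoid map** `F(ω, x, y) = (2ω, λx + ½cos 2πω, λy + ½sin 2πω)`
on the solid torus `𝕋 × D̄`, stated in terms of real lifts of circle points: if the
images agree (first coordinates modulo `ℤ`), then the arguments agree (first
coordinates modulo `ℤ`). -/
theorem solenoid_map_injective
    (lam : ℝ) (hlam0 : 0 < lam) (hlam : lam < 1 / 2)
    (ω₁ ω₂ x₁ y₁ x₂ y₂ : ℝ)
    (hd₁ : x₁ ^ 2 + y₁ ^ 2 ≤ 1) (hd₂ : x₂ ^ 2 + y₂ ^ 2 ≤ 1)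
    (hω : ∃ k : ℤ, 2 * ω₁ - 2 * ω₂ = (k : ℝ))
    (hx : lam * x₁ + (1 / 2) * Real.cos (2 * π * ω₁)
        = lam * x₂ + (1 / 2) * Real.cos (2 * π * ω₂))
    (hy : lam * y₁ + (1 / 2) * Real.sin (2 * π * ω₁)
        = lam * y₂ + (1 / 2) * Real.sin (2 * π * ω₂)) :
    (∃ k : ℤ, ω₁ - ω₂ = (k : ℝ)) ∧ x₁ = x₂ ∧ y₁ = y₂ := by
  obtain ⟨k, hk⟩ := hω
  rcases Int.even_or_odd k with ⟨m, hm⟩ | ⟨m, hm⟩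
  · -- k = 2m : the angles differ by a full multiple of 2π
    have hωm : ω₁ - ω₂ = (m : ℝ) := by
      have hkr : (k : ℝ) = (m : ℝ) + (m : ℝ) := by exact_mod_cast hm
      linarith [hk]
    have harg : 2 * π * ω₁ = 2 * π * ω₂ + (m : ℝ) * (2 * π) := by
      linear_combination (2 * π) * hωm
    have hcos : Real.cos (2 * π * ω₁) = Real.cos (2 * π * ω₂) := by
      rw [harg, Real.cos_add_int_mul_two_pi]
    have hsin : Real.sin (2 * π * ω₁) = Real.sin (2 * π * ω₂) := by
      rw [harg, Real.sin_add_int_mul_two_pi]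
    refine ⟨⟨m, hωm⟩, ?_, ?_⟩
    · have : lam * x₁ = lam * x₂ := by linarith [hx, hcos]
      exact mul_left_cancel₀ (ne_of_gt hlam0) this
    · have : lam * y₁ = lam * y₂ := by linarith [hy, hsin]
      exact mul_left_cancel₀ (ne_of_gt hlam0) this
  · -- k = 2m+1 : impossible
    exfalso
    have hkr : (k : ℝ) = 2 * (m : ℝ) + 1 := by exact_mod_cast hm
    have hωm : ω₁ - ω₂ = (m : ℝ) + 1 / 2 := by linarith [hk]
    have harg : 2 * π * ω₁ = (2 * π * ω₂ + π) + (m : ℝ) * (2 * π) := by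
      linear_combination (2 * π) * hωm
    have hcos : Real.cos (2 * π * ω₁) = -Real.cos (2 * π * ω₂) := by
      rw [harg, Real.cos_add_int_mul_two_pi, Real.cos_add_pi]
    have hsin : Real.sin (2 * π * ω₁) = -Real.sin (2 * π * ω₂) := by
      rw [harg, Real.sin_add_int_mul_two_pi, Real.sin_add_pi]
    set c := Real.cos (2 * π * ω₂)
    set s := Real.sin (2 * π * ω₂)
    have hcs : s ^ 2 + c ^ 2 = 1 := Real.sin_sq_add_cos_sq _
    have h1 : lam * (x₁ - x₂) = c := by rw [hcos] at hx; linarith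
    have h2 : lam * (y₁ - y₂) = s := by rw [hsin] at hy; linarith
    have hD : (x₁ - x₂) ^ 2 + (y₁ - y₂) ^ 2 ≤ 4 := by
      nlinarith [sq_nonneg (x₁ + x₂), sq_nonneg (y₁ + y₂)]
    have hsq : lam ^ 2 * ((x₁ - x₂) ^ 2 + (y₁ - y₂) ^ 2) = 1 := by
      linear_combination (lam * (x₁ - x₂) + c) * h1 + (lam * (y₁ - y₂) + s) * h2 + hcs
    nlinarith [hD, hsq, mul_pos hlam0 hlam0, sq_nonneg (x₁ - x₂), sq_nonneg (y₁ - y₂)]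
end
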